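/- arXiv:1505.06953 — 8 statements merged into one kernel-verified Lean document; each statement's English description precedes it below -/
import Mathlib

section
/- Let φ be a cPLTL formula and let α and β be variable valuations satisfying α(x) ≤ β(x) for every x ∈ var_F(φ) and α(y) ≥ β(y) for every y ∈ var_G(φ). If (w,α) ⊨ φ for a cost-trace w, then (w,β) ⊨ φ. -/
/-- A cost-trace: an infinite sequence of sets of atomic propositions interleaved
with natural-number costs. -/
structure Trace (P : Type) where
  state : ℕ → Set P
  cost : ℕ → ℕ

/-- The requirement that the distinguished proposition `κ` holds at a position iff
the last step had non-zero cost. -/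
def Trace.Valid {P : Type} (κ : P) (w : Trace P) : Prop :=
  ∀ n, 0 < w.cost n ↔ κ ∈ w.state (n + 1)

/-- The cost of the finite infix `wₙ cₙ ⋯ c_{n+j-1} w_{n+j}`. -/
def Trace.cst {P : Type} (w : Trace P) (n j : ℕ) : ℕ :=
  ∑ i ∈ Finset.range j, w.cost (n + i)
/-- Formulas of cPLTL in negation normal form. -/
inductive CPLTL (P : Type) (Var : Type) where
  | pos : P → CPLTL P Var
  | nneg : P → CPLTL P Var
  | conj : CPLTL P Var → CPLTL P Var → CPLTL P Var
  | disj : CPLTL P Var → CPLTL P Var → CPLTL P Var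
  | next : CPLTL P Var → CPLTL P Var
  | until_ : CPLTL P Var → CPLTL P Var → CPLTL P Var
  | release : CPLTL P Var → CPLTL P Var → CPLTL P Var
  | fleq : Var → CPLTL P Var → CPLTL P Var
  | gleq : Var → CPLTL P Var → CPLTL P Var

namespace CPLTL

variable {P Var : Type}

/-- The satisfaction relation `(w, n, α) ⊨ φ`. -/
def Sat (w : Trace P) (α : Var → ℕ) : ℕ → CPLTL P Var → Prop
  | n, pos p => p ∈ w.state n
  | n, nneg p => p ∉ w.state n
  | n, conj φ ψ => Sat w α n φ ∧ Sat w α n ψ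
  | n, disj φ ψ => Sat w α n φ ∨ Sat w α n ψ
  | n, next φ => Sat w α (n + 1) φ
  | n, until_ φ ψ => ∃ j, Sat w α (n + j) ψ ∧ ∀ k, k < j → Sat w α (n + k) φ
  | n, release φ ψ => ∀ j, Sat w α (n + j) ψ ∨ ∃ k, k < j ∧ Sat w α (n + k) φ
  | n, fleq z φ => ∃ j, w.cst n j ≤ α z ∧ Sat w α (n + j) φ
  | n, gleq z φ => ∀ j, w.cst n j ≤ α z → Sat w α (n + j) φ

/-- The variables parameterizing eventually operators. -/
def varF : CPLTL P Var → Set Var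
  | pos _ => ∅
  | nneg _ => ∅
  | conj φ ψ => varF φ ∪ varF ψ
  | disj φ ψ => varF φ ∪ varF ψ
  | next φ => varF φ
  | until_ φ ψ => varF φ ∪ varF ψ
  | release φ ψ => varF φ ∪ varF ψ
  | fleq z φ => insert z (varF φ)
  | gleq _ φ => varF φ

/-- The variables parameterizing always operators. -/
def varG : CPLTL P Var → Set Var
  | pos _ => ∅
  | nneg _ => ∅
  | conj φ ψ => varG φ ∪ varG ψ
  | disj φ ψ => varG φ ∪ varG ψ
  | next φ => varG φ
  | until_ φ ψ => varG φ ∪ varG ψ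
  | release φ ψ => varG φ ∪ varG ψ
  | fleq _ φ => varG φ
  | gleq z φ => insert z (varG φ)

/-- The set of subformulas of a formula. -/
def cl : CPLTL P Var → Set (CPLTL P Var)
  | pos p => {pos p}
  | nneg p => {nneg p}
  | conj φ ψ => insert (conj φ ψ) (cl φ ∪ cl ψ)
  | disj φ ψ => insert (disj φ ψ) (cl φ ∪ cl ψ)
  | next φ => insert (next φ) (cl φ)
  | until_ φ ψ => insert (until_ φ ψ) (cl φ ∪ cl ψ)
  | release φ ψ => insert (release φ ψ) (cl φ ∪ cl ψ)
  | fleq z φ => insert (fleq z φ) (cl φ)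
  | gleq z φ => insert (gleq z φ) (cl φ)

/-- The size of a formula: the number of its subformulas. -/
noncomputable def size (φ : CPLTL P Var) : ℕ := (cl φ).ncard

/-- The negation of a formula, defined via the dualities of the operators. -/
def negate : CPLTL P Var → CPLTL P Var
  | pos p => nneg p
  | nneg p => pos p
  | conj φ ψ => disj (negate φ) (negate ψ)
  | disj φ ψ => conj (negate φ) (negate ψ)
  | next φ => next (negate φ)
  | until_ φ ψ => release (negate φ) (negate ψ)
  | release φ ψ => until_ (negate φ) (negate ψ)
  | fleq z φ => gleq z (negate φ)
  | gleq z φ => fleq z (negate φ)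

/-- A formula is well-formed if no variable parameterizes both an eventually and
an always operator. -/
def WellFormed (φ : CPLTL P Var) : Prop := varF φ ∩ varG φ = ∅

/-- LTL formulas: no parameterized operators. -/
def IsLTL (φ : CPLTL P Var) : Prop := varF φ = ∅ ∧ varG φ = ∅

/-- cPLTL_F formulas: no parameterized always operators. -/
def IsF (φ : CPLTL P Var) : Prop := varG φ = ∅

/-- cPLTL_G formulas: no parameterized eventually operators. -/
def IsG (φ : CPLTL P Var) : Prop := varF φ = ∅

end CPLTL


theorem cpltl_mono_aux {P Var : Type} (φ : CPLTL P Var) (α β : Var → ℕ)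
    (hF : ∀ x ∈ CPLTL.varF φ, α x ≤ β x)
    (hG : ∀ y ∈ CPLTL.varG φ, β y ≤ α y)
    (w : Trace P) : ∀ n, CPLTL.Sat w α n φ → CPLTL.Sat w β n φ := by
  induction φ with
  | pos p => exact fun n h => h
  | nneg p => exact fun n h => h
  | conj φ ψ ihφ ihψ =>
    intro n h
    exact ⟨ihφ (fun x hx => hF x (Or.inl hx)) (fun y hy => hG y (Or.inl hy)) n h.1,
           ihψ (fun x hx => hF x (Or.inr hx)) (fun y hy => hG y (Or.inr hy)) n h.2⟩
  | disj φ ψ ihφ ihψ =>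
    intro n h
    exact h.imp (ihφ (fun x hx => hF x (Or.inl hx)) (fun y hy => hG y (Or.inl hy)) n)
                (ihψ (fun x hx => hF x (Or.inr hx)) (fun y hy => hG y (Or.inr hy)) n)
  | next φ ih => exact fun n h => ih hF hG (n+1) h
  | until_ φ ψ ihφ ihψ =>
    intro n ⟨j, hj, hk⟩
    exact ⟨j, ihψ (fun x hx => hF x (Or.inr hx)) (fun y hy => hG y (Or.inr hy)) _ hj,
      fun k hkj => ihφ (fun x hx => hF x (Or.inl hx)) (fun y hy => hG y (Or.inl hy)) _ (hk k hkj)⟩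
  | release φ ψ ihφ ihψ =>
    intro n h j
    exact (h j).imp (ihψ (fun x hx => hF x (Or.inr hx)) (fun y hy => hG y (Or.inr hy)) _)
      (fun ⟨k, hk, hs⟩ => ⟨k, hk, ihφ (fun x hx => hF x (Or.inl hx)) (fun y hy => hG y (Or.inl hy)) _ hs⟩)
  | fleq z φ ih =>
    intro n ⟨j, hj, hs⟩
    exact ⟨j, le_trans hj (hF z (Or.inl rfl)),
      ih (fun x hx => hF x (Or.inr hx)) hG _ hs⟩
  | gleq z φ ih =>
    intro n h j hj
    exact ih hF (fun y hy => hG y (Or.inr hy)) _ (h j (le_trans hj (hG z (Or.inl rfl))))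

/-- Monotonicity: if `α(x) ≤ β(x)` for every variable `x`
parameterizing an eventually operator of `φ` and `α(y) ≥ β(y)` for every variable `y`
parameterizing an always operator of `φ`, then `(w, α) ⊨ φ` implies `(w, β) ⊨ φ`. -/
theorem cpltl_monotonicity {P Var : Type} [Infinite Var] (κ : P)
    (φ : CPLTL P Var) (α β : Var → ℕ)
    (hF : ∀ x ∈ CPLTL.varF φ, α x ≤ β x)
    (hG : ∀ y ∈ CPLTL.varG φ, β y ≤ α y)
    (w : Trace P) (hw : w.Valid κ)
    (h : CPLTL.Sat w α 0 φ) :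
    CPLTL.Sat w β 0 φ := by
  exact cpltl_mono_aux φ α β hF hG w 0 h
end

section
/- Let w be a cost-trace and φ a cPLTL_F formula, and suppose (w,α) ⊨ φ for some variable valuation α. Then for every (k+1)-spaced coloring w' of w, where k = max_{x ∈ var(φ)} α(x), it holds that w' ⊨ rel(φ). -/
/-- `w'` (a cost-trace over `P ∪ {p}`, modeled as `Option P` with `none` playing the
role of the fresh proposition `p`) is a coloring of the cost-trace `w` over `P`:
they agree on `P` and on the costs. -/
def IsColoring {P : Type} (w' : Trace (Option P)) (w : Trace P) : Prop :=
  (∀ n, {q : P | some q ∈ w'.state n} = w.state n) ∧ ∀ n, w'.cost n = w.cost n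

/-- Position `n` is a changepoint of `w'`: `n = 0` or the truth value of the fresh
proposition differs at positions `n - 1` and `n`. -/
def Changepoint {P : Type} (w' : Trace (Option P)) (n : ℕ) : Prop :=
  n = 0 ∨ ¬ ((none ∈ w'.state (n - 1)) ↔ (none ∈ w'.state n))

/-- `m` and `m'` are successive changepoints; the block between them consists of the
positions `m, …, m' - 1`. -/
def SuccessiveCP {P : Type} (w' : Trace (Option P)) (m m' : ℕ) : Prop :=
  Changepoint w' m ∧ Changepoint w' m' ∧ m < m' ∧
    ∀ l, m < l → l < m' → ¬ Changepoint w' l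

/-- `m` is the last changepoint of `w'` (so the tail of `w'` starts at `m`). -/
def LastCP {P : Type} (w' : Trace (Option P)) (m : ℕ) : Prop :=
  Changepoint w' m ∧ ∀ l, m < l → ¬ Changepoint w' l

/-- `w'` is `k`-spaced: every block has cost at least `k` (no requirement on the tail). -/
def Spaced {P : Type} (w' : Trace (Option P)) (k : ℕ) : Prop :=
  ∀ m m', SuccessiveCP w' m m' → k ≤ w'.cst m (m' - 1 - m)

/-- `w'` is `k`-bounded: every block, and the tail if there is one, has cost at most `k`. -/
def Bounded {P : Type} (w' : Trace (Option P)) (k : ℕ) : Prop :=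
  (∀ m m', SuccessiveCP w' m m' → w'.cst m (m' - 1 - m) ≤ k) ∧
  (∀ m, LastCP w' m → ∀ j, w'.cst m j ≤ k)

/-- The relativization `rel(φ)` of a cPLTL_F formula `φ`: every subformula `F_{≤x} ψ`
is recursively replaced by `(p → p U (¬p U rel(ψ))) ∧ (¬p → ¬p U (p U rel(ψ)))`,
where the fresh proposition `p` is modeled by `none : Option P`. -/
def rel {P Var : Type} : CPLTL P Var → CPLTL (Option P) Var
  | .pos q => .pos (some q)
  | .nneg q => .nneg (some q)
  | .conj φ ψ => .conj (rel φ) (rel ψ)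
  | .disj φ ψ => .disj (rel φ) (rel ψ)
  | .next φ => .next (rel φ)
  | .until_ φ ψ => .until_ (rel φ) (rel ψ)
  | .release φ ψ => .release (rel φ) (rel ψ)
  | .fleq _ φ =>
      .conj (.disj (.nneg none) (.until_ (.pos none) (.until_ (.nneg none) (rel φ))))
            (.disj (.pos none) (.until_ (.nneg none) (.until_ (.pos none) (rel φ))))
  | .gleq z φ => .gleq z (rel φ)

section Aux

variable {P Var : Type}

lemma varF_finite (φ : CPLTL P Var) : (CPLTL.varF φ).Finite := by
  induction φ with
  | pos p => exact Set.finite_empty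
  | nneg p => exact Set.finite_empty
  | conj φ ψ ih1 ih2 => exact ih1.union ih2
  | disj φ ψ ih1 ih2 => exact ih1.union ih2
  | next φ ih => exact ih
  | until_ φ ψ ih1 ih2 => exact ih1.union ih2
  | release φ ψ ih1 ih2 => exact ih1.union ih2
  | fleq z φ ih => exact ih.insert z
  | gleq z φ ih => exact ih

lemma varG_finite (φ : CPLTL P Var) : (CPLTL.varG φ).Finite := by
  induction φ with
  | pos p => exact Set.finite_empty
  | nneg p => exact Set.finite_empty
  | conj φ ψ ih1 ih2 => exact ih1.union ih2
  | disj φ ψ ih1 ih2 => exact ih1.union ih2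
  | next φ ih => exact ih
  | until_ φ ψ ih1 ih2 => exact ih1.union ih2
  | release φ ψ ih1 ih2 => exact ih1.union ih2
  | fleq z φ ih => exact ih
  | gleq z φ ih => exact ih.insert z

lemma cst_split (w : Trace P) (n a b : ℕ) :
    w.cst n (a + b) = w.cst n a + w.cst (n + a) b := by
  unfold Trace.cst
  induction b with
  | zero => simp
  | succ b ih =>
      rw [Nat.add_succ, Finset.sum_range_succ, Finset.sum_range_succ, ih,
        show n + (a + b) = n + a + b by omega]
      omega

lemma cst_mono (w : Trace P) (n j a l : ℕ) (h1 : n ≤ a) (h2 : a + l ≤ n + j) :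
    w.cst a l ≤ w.cst n j := by
  have hj : j = (a - n) + (l + (j - (a - n) - l)) := by omega
  rw [hj, cst_split, cst_split, show n + (a - n) = a by omega]
  omega

lemma cst_eq_of_coloring {w' : Trace (Option P)} {w : Trace P} (hcol : IsColoring w' w)
    (n j : ℕ) : w'.cst n j = w.cst n j := by
  unfold Trace.cst
  exact Finset.sum_congr rfl fun i _ => hcol.2 _

/-- There cannot be two changepoints strictly inside a window of cost `≤ k`
in a `(k+1)`-spaced trace. -/
lemma no_two_cp (w' : Trace (Option P)) (k : ℕ) (hsp : Spaced w' (k + 1))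
    (n j : ℕ) (hcost : w'.cst n j ≤ k) (a b : ℕ) (ha : n < a) (hab : a < b) (hb : b ≤ n + j)
    (hcha : ¬((none ∈ w'.state (a - 1)) ↔ none ∈ w'.state a))
    (hchb : ¬((none ∈ w'.state (b - 1)) ↔ none ∈ w'.state b)) : False := by
  classical
  have hex2 : ∃ c, a < c ∧ ¬((none ∈ w'.state (c - 1)) ↔ none ∈ w'.state c) := ⟨b, hab, hchb⟩
  set c := Nat.find hex2 with hcdef
  have hc := Nat.find_spec hex2
  have hcb : c ≤ b := Nat.find_min' hex2 ⟨hab, hchb⟩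
  have hsucc : SuccessiveCP w' a c := by
    refine ⟨Or.inr hcha, Or.inr hc.2, hc.1, ?_⟩
    intro l h1 h2 hcp
    rcases hcp with h0 | hch
    · omega
    · exact Nat.find_min hex2 h2 ⟨h1, hch⟩
  have hblk := hsp a c hsucc
  have hmono : w'.cst a (c - 1 - a) ≤ w'.cst n j := by
    apply cst_mono
    · omega
    · omega
  omega

lemma key_until (Q Q' R : ℕ → Prop) (n j c : ℕ) (hnc : n ≤ c) (hc : c ≤ n + j + 1)
    (hR : R (n + j)) (h1 : ∀ i, n ≤ i → i < c → Q i) (h2 : ∀ i, c ≤ i → i ≤ n + j → Q' i) :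
    ∃ j₁, (∃ j₂, R (n + j₁ + j₂) ∧ ∀ m, m < j₂ → Q' (n + j₁ + m)) ∧
      ∀ m, m < j₁ → Q (n + m) := by
  rcases le_or_gt c (n + j) with hle | hgt
  · refine ⟨c - n, ⟨n + j - c, ?_, ?_⟩, ?_⟩
    · rwa [show n + (c - n) + (n + j - c) = n + j by omega]
    · intro m hm
      rw [show n + (c - n) + m = c + m by omega]
      exact h2 (c + m) (by omega) (by omega)
    · intro m hm; exact h1 (n + m) (by omega) (by omega)
  · refine ⟨j, ⟨0, by simpa using hR, fun m hm => absurd hm (Nat.not_lt_zero m)⟩, ?_⟩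
    intro m hm; exact h1 (n + m) (by omega) (by omega)

lemma rel_sat (w : Trace P) (α : Var → ℕ) (k : ℕ)
    (w' : Trace (Option P)) (hcol : IsColoring w' w) (hsp : Spaced w' (k + 1)) :
    ∀ ψ : CPLTL P Var, CPLTL.varG ψ = ∅ → (∀ z ∈ CPLTL.varF ψ, α z ≤ k) →
      ∀ n, CPLTL.Sat w α n ψ → CPLTL.Sat w' (fun _ => 0) n (rel ψ) := by
  intro ψ
  induction ψ with
  | pos p =>
      intro _ _ n h
      have hh : p ∈ w.state n := h
      rw [← hcol.1 n] at hh
      exact hh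
  | nneg p =>
      intro _ _ n h
      have hh : p ∉ w.state n := h
      rw [← hcol.1 n] at hh
      exact fun hm => hh hm
  | conj φ ψ ih1 ih2 =>
      intro hG hk n h
      rw [CPLTL.varG, Set.union_empty_iff] at hG
      exact ⟨ih1 hG.1 (fun z hz => hk z (Set.mem_union_left _ hz)) n h.1,
             ih2 hG.2 (fun z hz => hk z (Set.mem_union_right _ hz)) n h.2⟩
  | disj φ ψ ih1 ih2 =>
      intro hG hk n h
      rw [CPLTL.varG, Set.union_empty_iff] at hG
      rcases h with h | h
      · exact Or.inl (ih1 hG.1 (fun z hz => hk z (Set.mem_union_left _ hz)) n h)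
      · exact Or.inr (ih2 hG.2 (fun z hz => hk z (Set.mem_union_right _ hz)) n h)
  | next φ ih =>
      intro hG hk n h
      exact ih hG hk (n + 1) h
  | until_ φ ψ ih1 ih2 =>
      intro hG hk n h
      rw [CPLTL.varG, Set.union_empty_iff] at hG
      obtain ⟨j, h1, h2⟩ := h
      exact ⟨j, ih2 hG.2 (fun z hz => hk z (Set.mem_union_right _ hz)) _ h1,
             fun m hm => ih1 hG.1 (fun z hz => hk z (Set.mem_union_left _ hz)) _ (h2 m hm)⟩
  | release φ ψ ih1 ih2 =>
      intro hG hk n h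
      rw [CPLTL.varG, Set.union_empty_iff] at hG
      intro j
      rcases h j with h | ⟨m, hm, hs⟩
      · exact Or.inl (ih2 hG.2 (fun z hz => hk z (Set.mem_union_right _ hz)) _ h)
      · exact Or.inr ⟨m, hm, ih1 hG.1 (fun z hz => hk z (Set.mem_union_left _ hz)) _ hs⟩
  | gleq z φ ih =>
      intro hG _ _ _
      exact absurd hG (by simp [CPLTL.varG, Set.insert_nonempty z φ.varG |>.ne_empty])
  | fleq z ψ ih =>
      intro hG hk n h
      classical
      obtain ⟨j, hcost, hψ⟩ := h
      have hG' : CPLTL.varG ψ = ∅ := hG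
      have hz : α z ≤ k := hk z (Set.mem_insert _ _)
      have hk' : ∀ x ∈ CPLTL.varF ψ, α x ≤ k := fun x hx => hk x (Set.mem_insert_of_mem _ hx)
      have hR := ih hG' hk' (n + j) hψ
      have hcost' : w'.cst n j ≤ k := by
        rw [cst_eq_of_coloring hcol]; exact le_trans hcost hz
      -- find the (at most one) switch point
      have hswitch : ∃ c, n ≤ c ∧ c ≤ n + j + 1 ∧
          (∀ i, n ≤ i → i < c → (none ∈ w'.state i ↔ none ∈ w'.state n)) ∧
          (∀ i, c ≤ i → i ≤ n + j → ¬(none ∈ w'.state i ↔ none ∈ w'.state n)) := by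
        by_cases hex : ∃ c, n < c ∧ c ≤ n + j ∧
            ¬((none ∈ w'.state (c - 1)) ↔ none ∈ w'.state c)
        · set c := Nat.find hex with hcdef
          have hc := Nat.find_spec hex
          have hafter : ∀ b, c < b → b ≤ n + j →
              ((none ∈ w'.state (b - 1)) ↔ none ∈ w'.state b) := by
            intro b h1 h2
            by_contra hch
            exact no_two_cp w' k hsp n j hcost' c b hc.1 h1 h2 hc.2.2 hch
          have hbefore : ∀ d, n + d < c →
              ((none ∈ w'.state (n + d)) ↔ none ∈ w'.state n) := by
            intro d
            induction d with
            | zero => intro _; exact Iff.rfl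
            | succ d ihd =>
                intro hlt
                have hnc : ¬¬((none ∈ w'.state (n + d)) ↔ none ∈ w'.state (n + d + 1)) := by
                  intro hch
                  refine Nat.find_min hex (show n + d + 1 < c by omega) ⟨by omega, by omega, ?_⟩
                  rw [show n + d + 1 - 1 = n + d by omega]
                  exact hch
                rw [show n + (d + 1) = n + d + 1 by omega]
                exact ((not_not.mp hnc).symm).trans (ihd (by omega))
          have hconstafter : ∀ d, c + d ≤ n + j →
              ((none ∈ w'.state (c + d)) ↔ none ∈ w'.state c) := by
            intro d
            induction d with
            | zero => intro _; exact Iff.rfl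
            | succ d ihd =>
                intro hle
                have := hafter (c + d + 1) (by omega) (by omega)
                rw [show c + d + 1 - 1 = c + d by omega] at this
                rw [show c + (d + 1) = c + d + 1 by omega]
                exact this.symm.trans (ihd (by omega))
          have hcneg : ¬((none ∈ w'.state c) ↔ none ∈ w'.state n) := by
            have h1 := hbefore (c - 1 - n) (by omega)
            rw [show n + (c - 1 - n) = c - 1 by omega] at h1
            have h2 := hc.2.2
            tauto
          refine ⟨c, by omega, by omega, ?_, ?_⟩
          · intro i h1i h2i
            have := hbefore (i - n) (by omega)
            rwa [show n + (i - n) = i by omega] at this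
          · intro i h1i h2i
            have := hconstafter (i - c) (by omega)
            rw [show c + (i - c) = i by omega] at this
            tauto
        · refine ⟨n + j + 1, by omega, le_refl _, ?_, fun i h1 h2 => absurd h2 (by omega)⟩
          have hconst : ∀ d, n + d ≤ n + j →
              ((none ∈ w'.state (n + d)) ↔ none ∈ w'.state n) := by
            intro d
            induction d with
            | zero => intro _; exact Iff.rfl
            | succ d ihd =>
                intro hle
                have hnc : ¬¬((none ∈ w'.state (n + d)) ↔ none ∈ w'.state (n + d + 1)) := by
                  intro hch
                  refine hex ⟨n + d + 1, by omega, by omega, ?_⟩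
                  rw [show n + d + 1 - 1 = n + d by omega]
                  exact hch
                rw [show n + (d + 1) = n + d + 1 by omega]
                exact ((not_not.mp hnc).symm).trans (ihd (by omega))
          intro i h1 h2
          have := hconst (i - n) (by omega)
          rwa [show n + (i - n) = i by omega] at this
      obtain ⟨c, hc1, hc2, hQ, hQ'⟩ := hswitch
      simp only [rel, CPLTL.Sat]
      by_cases hp : none ∈ w'.state n
      · constructor
        · exact Or.inr (key_until (fun m => none ∈ w'.state m) (fun m => none ∉ w'.state m)
            (fun m => CPLTL.Sat w' (fun _ => 0) m (rel ψ)) n j c hc1 hc2 hR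
            (fun i hi1 hi2 => (hQ i hi1 hi2).mpr hp)
            (fun i hi1 hi2 hpi => hQ' i hi1 hi2 ⟨fun _ => hp, fun _ => hpi⟩))
        · exact Or.inl hp
      · constructor
        · exact Or.inl hp
        · refine Or.inr (key_until (fun m => none ∉ w'.state m) (fun m => none ∈ w'.state m)
            (fun m => CPLTL.Sat w' (fun _ => 0) m (rel ψ)) n j c hc1 hc2 hR
            (fun i hi1 hi2 hpi => hp ((hQ i hi1 hi2).mp hpi))
            (fun i hi1 hi2 => ?_))
          by_contra hpi
          exact hQ' i hi1 hi2 ⟨fun h => absurd h hpi, fun h => absurd h hp⟩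

end Aux

/-- Alternating-color technique, first direction: if `(w, α) ⊨ φ`
for a cPLTL_F formula `φ`, then every `(k+1)`-spaced coloring `w'` of `w`, where
`k = max_{x ∈ var(φ)} α(x)`, satisfies `rel(φ)` (which is variable-free, so it is
evaluated with respect to the trivial valuation). -/
theorem altcolor_spaced {P Var : Type} [Infinite Var] (κ : P)
    (w : Trace P) (hw : w.Valid κ)
    (φ : CPLTL P Var) (hφ : CPLTL.IsF φ)
    (α : Var → ℕ) (h : CPLTL.Sat w α 0 φ)
    (k : ℕ) (hk : k = sSup (α '' (CPLTL.varF φ ∪ CPLTL.varG φ)))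
    (w' : Trace (Option P)) (hcol : IsColoring w' w)
    (hsp : Spaced w' (k + 1)) :
    CPLTL.Sat w' (fun _ => 0) 0 (rel φ) := by
  have hG : CPLTL.varG φ = ∅ := hφ
  refine rel_sat w α k w' hcol hsp φ hG ?_ 0 h
  intro z hz
  rw [hk]
  apply le_csSup
  · exact (((varF_finite φ).union (varG_finite φ)).image α).bddAbove
  · exact Set.mem_image_of_mem α (Set.mem_union_left _ hz)
end

section
/- There is a constant c such that the following holds: if a colored Büchi graph with costs with n vertices has an initial pumpable fair path, then it also has an initial pumpable fair path of the ultimately periodic form π₀ π₁^ω with |π₀ π₁| ≤ c · n². -/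
/-- A colored Büchi graph with costs: a directed graph with an initial vertex, a
labeling by subsets of `{p}` (modeled as `Bool`), a cost function on edges, and a
set of accepting vertices. -/
structure CBG (V : Type) where
  init : V
  edge : V → V → Prop
  label : V → Bool
  cost : V → V → ℕ
  acc : V → Prop

namespace CBG

variable {V : Type}

/-- An initial path of the graph. -/
def IsPath (G : CBG V) (π : ℕ → V) : Prop :=
  π 0 = G.init ∧ ∀ n, G.edge (π n) (π (n + 1))

/-- Position `n` is a changepoint of the path `π`. -/
def Changepoint (G : CBG V) (π : ℕ → V) (n : ℕ) : Prop :=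
  n = 0 ∨ G.label (π (n - 1)) ≠ G.label (π n)

/-- The cost of the infix of the path `π` from position `i` to position `j`. -/
def pathCost (G : CBG V) (π : ℕ → V) (i j : ℕ) : ℕ :=
  ∑ l ∈ Finset.Ico i j, G.cost (π l) (π (l + 1))

/-- A path is pumpable if each of its blocks (induced by the labeling) contains a
vertex repetition such that the cycle formed by the repetition has non-zero cost
(no requirement on the tail). -/
def Pumpable (G : CBG V) (π : ℕ → V) : Prop :=
  ∀ m m', Changepoint G π m → Changepoint G π m' → m < m' →
    (∀ l, m < l → l < m' → ¬ Changepoint G π l) →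
    ∃ i j, m ≤ i ∧ i < j ∧ j ≤ m' - 1 ∧ π i = π j ∧ 0 < pathCost G π i j

/-- A path is fair if it visits the accepting set infinitely often. -/
def Fair (G : CBG V) (π : ℕ → V) : Prop :=
  ∀ N, ∃ n, N ≤ n ∧ G.acc (π n)

/-- An initial pumpable fair path. -/
def InitPumpFair (G : CBG V) (π : ℕ → V) : Prop :=
  IsPath G π ∧ Pumpable G π ∧ Fair G π

section Aux

open Classical
attribute [local instance] Classical.propDecidable

variable {V : Type} (G : CBG V)

lemma pathCost_eq_range (f : ℕ → V) (i j : ℕ) :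
    pathCost G f i j = ∑ l ∈ Finset.range (j - i), G.cost (f (i + l)) (f (i + l + 1)) := by
  rw [pathCost, Finset.sum_Ico_eq_sum_range]

lemma pathCost_congr (f h : ℕ → V) {i j : ℕ} (H : ∀ l, i ≤ l → l ≤ j → f l = h l) :
    pathCost G f i j = pathCost G h i j := by
  unfold pathCost
  apply Finset.sum_congr rfl
  intro l hl
  rw [Finset.mem_Ico] at hl
  rw [H l hl.1 (le_of_lt hl.2), H (l+1) (by omega) (by omega)]

lemma pathCost_shift (f : ℕ → V) (c i j : ℕ) :
    pathCost G f (i + c) (j + c) = pathCost G (fun l => f (l + c)) i j := by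
  rw [pathCost_eq_range, pathCost_eq_range]
  have : j + c - (i + c) = j - i := by omega
  rw [this]
  apply Finset.sum_congr rfl
  intro l _
  show G.cost (f (i + c + l)) (f (i + c + l + 1)) = G.cost (f (i + l + c)) (f (i + l + 1 + c))
  rw [show i + c + l = i + l + c by omega, show i + l + c + 1 = i + l + 1 + c by omega]

lemma pathCost_add (f : ℕ → V) {i j k : ℕ} (h1 : i ≤ j) (h2 : j ≤ k) :
    pathCost G f i j + pathCost G f j k = pathCost G f i k := by
  unfold pathCost
  rw [Finset.sum_Ico_consecutive _ h1 h2]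

lemma cp_zero (π : ℕ → V) : Changepoint G π 0 := Or.inl rfl

lemma cp_iff_of_pos (π : ℕ → V) {l : ℕ} (hl : 0 < l) :
    Changepoint G π l ↔ G.label (π (l - 1)) ≠ G.label (π l) := by
  unfold Changepoint
  constructor
  · rintro (h | h)
    · omega
    · exact h
  · exact Or.inr

/-- A finite walk: `L` edges, vertices `f 0 .. f L`. -/
def IsWalk (f : ℕ → V) (L : ℕ) : Prop := ∀ i, i < L → G.edge (f i) (f (i + 1))

lemma shortenWalk [Fintype V] (f : ℕ → V) (L : ℕ) (hw : IsWalk G f L) :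
    ∃ g M, IsWalk G g M ∧ g 0 = f 0 ∧ g M = f L ∧ M + 1 ≤ Fintype.card V ∧
      ∀ i, i ≤ M → ∃ t, t ≤ L ∧ g i = f t := by
  induction L using Nat.strong_induction_on generalizing f with
  | _ L IH =>
    by_cases hrep : ∃ t t', t < t' ∧ t' ≤ L ∧ f t = f t'
    · obtain ⟨t, t', htt, ht'L, heq⟩ := hrep
      set d := t' - t with hd
      have hd1 : 1 ≤ d := by omega
      set h : ℕ → V := fun i => if i < t then f i else f (i + d) with hh
      have hagree : ∀ i, i ≤ t → h i = f i := by
        intro i hi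
        by_cases hit : i < t
        · simp [hh, hit]
        · have hit' : i = t := by omega
          rw [hit']
          simp only [hh, if_neg (lt_irrefl t)]
          rw [show t + d = t' by omega, ← heq]
      have hshift : ∀ i, t ≤ i → h i = f (i + d) := by
        intro i hi
        by_cases hit : i < t
        · omega
        · simp [hh, hit]
      have hwalk : IsWalk G h (L - d) := by
        intro i hi
        by_cases hit : i + 1 ≤ t
        · rw [hagree i (by omega), hagree (i+1) hit]
          exact hw i (by omega)
        · rw [hshift i (by omega), hshift (i+1) (by omega)]
          have : i + d + 1 = i + 1 + d := by omega
          rw [show i + 1 + d = i + d + 1 by omega]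
          exact hw (i + d) (by omega)
      obtain ⟨g, M, hg1, hg2, hg3, hg4, hg5⟩ := IH (L - d) (by omega) h hwalk
      refine ⟨g, M, hg1, ?_, ?_, hg4, ?_⟩
      · rw [hg2, hagree 0 (by omega)]
      · rw [hg3, hshift (L - d) (by omega)]
        congr 1; omega
      · intro i hi
        obtain ⟨s, hs, hgs⟩ := hg5 i hi
        by_cases hst : s ≤ t
        · exact ⟨s, by omega, by rw [hgs, hagree s hst]⟩
        · exact ⟨s + d, by omega, by rw [hgs, hshift s (by omega)]⟩
    · push_neg at hrep
      refine ⟨f, L, hw, rfl, rfl, ?_, fun i hi => ⟨i, hi, rfl⟩⟩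
      have hinj : Set.InjOn f (Finset.range (L + 1)) := by
        intro a ha b hb hab
        simp only [Finset.coe_range, Set.mem_Iio] at ha hb
        by_contra hne
        rcases Nat.lt_or_ge a b with h | h
        · exact hrep a b h (by omega) hab
        · exact hrep b a (by omega) (by omega) hab.symm
      have := Finset.card_le_card_of_injOn f (fun a _ => Finset.mem_univ (f a)) hinj
      simpa using this

lemma shortenPosCycle [Fintype V] (f : ℕ → V) (L : ℕ) (hw : IsWalk G f L)
    (hc : f L = f 0) (hpos : 0 < pathCost G f 0 L) :
    ∃ g M, IsWalk G g M ∧ g M = g 0 ∧ 0 < pathCost G g 0 M ∧ M ≤ Fintype.card V ∧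
      ∀ i, i ≤ M → ∃ t, t ≤ L ∧ g i = f t := by
  induction L using Nat.strong_induction_on generalizing f with
  | _ L IH =>
    by_cases hrep : ∃ t t', t < t' ∧ t' ≤ L ∧ (0 < t ∨ t' < L) ∧ f t = f t'
    · obtain ⟨t, t', htt, ht'L, hnt, heq⟩ := hrep
      set d := t' - t with hd
      -- inner cycle
      set inn : ℕ → V := fun i => f (t + i) with hinn
      have hinnw : IsWalk G inn d := by
        intro i hi
        have : t + i + 1 = t + (i+1) := by omega
        simp only [hinn]
        rw [show t + (i + 1) = t + i + 1 by omega]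
        exact hw (t + i) (by omega)
      have hinnc : inn d = inn 0 := by
        simp only [hinn]
        rw [show t + d = t' by omega, show t + 0 = t from rfl, heq]
      have hinncost : pathCost G inn 0 d = pathCost G f t t' := by
        have := pathCost_shift G f t 0 d
        rw [show 0 + t = t by omega, show d + t = t' by omega] at this
        rw [this]
        apply pathCost_congr
        intro l _ _
        simp only [hinn]; congr 1; omega
      -- outer cycle
      set h : ℕ → V := fun i => if i < t then f i else f (i + d) with hh
      have hagree : ∀ i, i ≤ t → h i = f i := by
        intro i hi
        by_cases hit : i < t
        · simp [hh, hit]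
        · have hit' : i = t := by omega
          rw [hit']
          simp only [hh, if_neg (lt_irrefl t)]
          rw [show t + d = t' by omega, ← heq]
      have hshift : ∀ i, t ≤ i → h i = f (i + d) := by
        intro i hi
        by_cases hit : i < t
        · omega
        · simp [hh, hit]
      have hwalk : IsWalk G h (L - d) := by
        intro i hi
        by_cases hit : i + 1 ≤ t
        · rw [hagree i (by omega), hagree (i+1) hit]
          exact hw i (by omega)
        · rw [hshift i (by omega), hshift (i+1) (by omega)]
          rw [show i + 1 + d = i + d + 1 by omega]
          exact hw (i + d) (by omega)
      have hhc : h (L - d) = h 0 := by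
        rw [hshift (L - d) (by omega), hagree 0 (by omega)]
        rw [show L - d + d = L by omega, hc]
      have hcost1 : pathCost G h 0 t = pathCost G f 0 t :=
        pathCost_congr G _ _ (fun l hl1 hl2 => hagree l hl2)
      have hcost2 : pathCost G h t (L - d) = pathCost G f t' L := by
        have e1 : pathCost G h t (L - d) = pathCost G (fun l => h (l + t)) 0 (L - d - t) := by
          have := pathCost_shift G h t 0 (L - d - t)
          rw [show 0 + t = t by omega, show L - d - t + t = L - d by omega] at this
          exact this
        have e2 : pathCost G f t' L = pathCost G (fun l => f (l + t')) 0 (L - t') := by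
          have := pathCost_shift G f t' 0 (L - t')
          rw [show 0 + t' = t' by omega, show L - t' + t' = L by omega] at this
          exact this
        rw [e1, e2, show L - d - t = L - t' by omega]
        apply pathCost_congr
        intro l _ _
        rw [hshift (l + t) (by omega)]
        congr 1; omega
      have hsplit : pathCost G f 0 L = pathCost G f 0 t + pathCost G f t t' + pathCost G f t' L := by
        rw [pathCost_add G f (by omega : (0:ℕ) ≤ t) (by omega : t ≤ t'),
            pathCost_add G f (by omega : (0:ℕ) ≤ t') (by omega : t' ≤ L)]
      by_cases hic : 0 < pathCost G f t t'
      · obtain ⟨g, M, hg1, hg2, hg3, hg4, hg5⟩ := IH d (by omega) inn hinnw hinnc (by rw [hinncost]; exact hic)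
        refine ⟨g, M, hg1, hg2, hg3, hg4, ?_⟩
        intro i hi
        obtain ⟨s, hs, hgs⟩ := hg5 i hi
        exact ⟨t + s, by omega, by rw [hgs]⟩
      · have hoc : 0 < pathCost G h 0 (L - d) := by
          have : pathCost G h 0 (L - d) = pathCost G f 0 t + pathCost G f t' L := by
            rw [← pathCost_add G h (by omega : (0:ℕ) ≤ t) (by omega : t ≤ L - d), hcost1, hcost2]
          omega
        obtain ⟨g, M, hg1, hg2, hg3, hg4, hg5⟩ := IH (L - d) (by omega) h hwalk hhc hoc
        refine ⟨g, M, hg1, hg2, hg3, hg4, ?_⟩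
        intro i hi
        obtain ⟨s, hs, hgs⟩ := hg5 i hi
        by_cases hst : s ≤ t
        · exact ⟨s, by omega, by rw [hgs, hagree s hst]⟩
        · exact ⟨s + d, by omega, by rw [hgs, hshift s (by omega)]⟩
    · push_neg at hrep
      have hL : 0 < L := by
        by_contra h
        have : L = 0 := by omega
        subst this
        simp [pathCost] at hpos
      refine ⟨f, L, hw, hc, hpos, ?_, fun i hi => ⟨i, hi, rfl⟩⟩
      have hinj : Set.InjOn f (Finset.range L) := by
        intro a ha b hb hab
        simp only [Finset.coe_range, Set.mem_Iio] at ha hb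
        by_contra hne
        rcases Nat.lt_or_ge a b with h | h
        · exact hrep a b h (by omega) (by omega) hab
        · exact hrep b a (by omega) (by omega) (by omega) hab.symm
      have := Finset.card_le_card_of_injOn f (fun a _ => Finset.mem_univ (f a)) hinj
      simpa using this

end Aux
section Aux2

variable {V : Type} (G : CBG V)

/-- Glue two finite walks sharing an endpoint. -/
def wglue (f : ℕ → V) (M : ℕ) (g : ℕ → V) : ℕ → V := fun i => if i < M then f i else g (i - M)

lemma wglue_left (f : ℕ → V) (M : ℕ) (g : ℕ → V) (h : f M = g 0) :
    ∀ i, i ≤ M → wglue f M g i = f i := by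
  intro i hi
  by_cases hiM : i < M
  · simp [wglue, hiM]
  · have : i = M := by omega
    subst this
    simp [wglue, h]

lemma wglue_right (f : ℕ → V) (M : ℕ) (g : ℕ → V) :
    ∀ i, M ≤ i → wglue f M g i = g (i - M) := by
  intro i hi
  by_cases hiM : i < M
  · omega
  · simp [wglue, hiM]

lemma wglue_isWalk (f : ℕ → V) (M : ℕ) (g : ℕ → V) (N : ℕ)
    (hf : IsWalk G f M) (hg : IsWalk G g N) (h : f M = g 0) :
    IsWalk G (wglue f M g) (M + N) := by
  intro i hi
  by_cases hiM : i + 1 ≤ M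
  · rw [wglue_left f M g h i (by omega), wglue_left f M g h (i+1) hiM]
    exact hf i (by omega)
  · rw [wglue_right f M g i (by omega), wglue_right f M g (i+1) (by omega)]
    rw [show i + 1 - M = i - M + 1 by omega]
    exact hg (i - M) (by omega)

lemma shortSegment [Fintype V] (w : ℕ → V) (L : ℕ) (hw : IsWalk G w L)
    (x y : ℕ) (hxy : x ≤ y) (hyL : y ≤ L) :
    ∃ g M, IsWalk G g M ∧ g 0 = w x ∧ g M = w y ∧ M + 1 ≤ Fintype.card V ∧
      ∀ i, i ≤ M → ∃ t, x ≤ t ∧ t ≤ y ∧ g i = w t := by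
  have hw' : IsWalk G (fun l => w (l + x)) (y - x) := by
    intro i hi
    show G.edge (w (i + x)) (w (i + 1 + x))
    rw [show i + 1 + x = i + x + 1 by omega]
    exact hw (i + x) (by omega)
  obtain ⟨g, M, h1, h2, h3, h4, h5⟩ := shortenWalk G _ (y - x) hw'
  refine ⟨g, M, h1, by simpa using h2, by rw [h3]; show w (y - x + x) = w y; rw [show y - x + x = y by omega], h4, ?_⟩
  intro i hi
  obtain ⟨t, ht, hgt⟩ := h5 i hi
  exact ⟨t + x, by omega, by omega, hgt⟩

lemma shortSegment2 [Fintype V] (w : ℕ → V) (L : ℕ) (hw : IsWalk G w L)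
    (x y z : ℕ) (hxy : x ≤ y) (hyz : y ≤ z) (hzL : z ≤ L) :
    ∃ g M M₁, IsWalk G g M ∧ g 0 = w x ∧ g M = w z ∧ M₁ ≤ M ∧ g M₁ = w y ∧
      M + 2 ≤ 2 * Fintype.card V ∧
      ∀ i, i ≤ M → ∃ t, x ≤ t ∧ t ≤ z ∧ g i = w t := by
  obtain ⟨g1, M1, h11, h12, h13, h14, h15⟩ := shortSegment G w L hw x y hxy (by omega)
  obtain ⟨g2, M2, h21, h22, h23, h24, h25⟩ := shortSegment G w L hw y z hyz hzL
  have hcomp : g1 M1 = g2 0 := by rw [h13, h22]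
  refine ⟨wglue g1 M1 g2, M1 + M2, M1, wglue_isWalk G g1 M1 g2 M2 h11 h21 hcomp, ?_, ?_, by omega, ?_, by omega, ?_⟩
  · rw [wglue_left g1 M1 g2 hcomp 0 (by omega), h12]
  · rw [wglue_right g1 M1 g2 (M1 + M2) (by omega)]
    rw [show M1 + M2 - M1 = M2 by omega, h23]
  · rw [wglue_left g1 M1 g2 hcomp M1 le_rfl, h13]
  · intro i hi
    by_cases hiM : i ≤ M1
    · obtain ⟨t, ht1, ht2, hgt⟩ := h15 i hiM
      exact ⟨t, ht1, by omega, by rw [wglue_left g1 M1 g2 hcomp i hiM, hgt]⟩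
    · obtain ⟨t, ht1, ht2, hgt⟩ := h25 (i - M1) (by omega)
      exact ⟨t, by omega, ht2, by rw [wglue_right g1 M1 g2 i (by omega), hgt]⟩

lemma shortBlock [Fintype V] (w : ℕ → V) (L : ℕ) (hw : IsWalk G w L)
    (i j : ℕ) (hij : i < j) (hjL : j ≤ L) (heq : w i = w j) (hpos : 0 < pathCost G w i j)
    (β : ℕ) (hβ : β ≤ L) :
    ∃ g M, IsWalk G g M ∧ g 0 = w 0 ∧ g M = w L ∧ M + 1 ≤ 4 * Fintype.card V ∧
      (∀ i', i' ≤ M → ∃ t, t ≤ L ∧ g i' = w t) ∧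
      (∃ x y, x < y ∧ y ≤ M ∧ g x = g y ∧ 0 < pathCost G g x y) ∧
      (∃ x, x ≤ M ∧ g x = w β) := by
  -- the positive-cost cycle, shortened
  have hw' : IsWalk G (fun l => w (l + i)) (j - i) := by
    intro l hl
    show G.edge (w (l + i)) (w (l + 1 + i))
    rw [show l + 1 + i = l + i + 1 by omega]
    exact hw (l + i) (by omega)
  have hc' : (fun l => w (l + i)) (j - i) = (fun l => w (l + i)) 0 := by
    simp only []
    rw [show j - i + i = j by omega, show 0 + i = i by omega, heq]
  have hpos' : 0 < pathCost G (fun l => w (l + i)) 0 (j - i) := by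
    have := pathCost_shift G w i 0 (j - i)
    rw [show 0 + i = i by omega, show j - i + i = j by omega] at this
    rw [← this]; exact hpos
  obtain ⟨cyc, Mc, hcw, hcc, hcpos, hcM, hccont⟩ :=
    shortenPosCycle G _ (j - i) hw' hc' hpos'
  have hMc : 0 < Mc := by
    by_contra h
    have : Mc = 0 := by omega
    subst this
    simp [pathCost] at hcpos
  obtain ⟨s0, hs0, hcyc0⟩ := hccont 0 (by omega)
  set σ := s0 + i with hσ
  have hσL : σ ≤ L := by omega
  have hcyc0' : cyc 0 = w σ := hcyc0
  have hcycM : cyc Mc = w σ := by rw [hcc, hcyc0']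
  have hccont' : ∀ x, x ≤ Mc → ∃ t, t ≤ L ∧ cyc x = w t := by
    intro x hx
    obtain ⟨t, ht, hct⟩ := hccont x hx
    exact ⟨t + i, by omega, hct⟩
  rcases le_total σ β with hσβ | hβσ
  · -- SW(0→σ) ++ cyc ++ SW2(σ→β→L)
    obtain ⟨g1, M1, h11, h12, h13, h14, h15⟩ := shortSegment G w L hw 0 σ (by omega) hσL
    obtain ⟨g3, M3, N3, h31, h32, h33, h34, h35, h36, h37⟩ :=
      shortSegment2 G w L hw σ β L hσβ hβ le_rfl
    have hcomp1 : g1 M1 = cyc 0 := by rw [h13, hcyc0']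
    have hcomp2 : cyc Mc = g3 0 := by rw [hcycM, h32]
    set g2 := wglue cyc Mc g3 with hg2
    have h2w : IsWalk G g2 (Mc + M3) := wglue_isWalk G cyc Mc g3 M3 hcw h31 hcomp2
    have hcomp12 : g1 M1 = g2 0 := by
      rw [hg2, wglue_left cyc Mc g3 hcomp2 0 (by omega), hcomp1]
    set g := wglue g1 M1 g2 with hg
    refine ⟨g, M1 + (Mc + M3), wglue_isWalk G g1 M1 g2 (Mc + M3) h11 h2w hcomp12, ?_, ?_, by omega, ?_, ?_, ?_⟩
    · rw [hg, wglue_left g1 M1 g2 hcomp12 0 (by omega), h12]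
    · rw [hg, wglue_right g1 M1 g2 _ (by omega), show M1 + (Mc + M3) - M1 = Mc + M3 by omega,
          hg2, wglue_right cyc Mc g3 _ (by omega), show Mc + M3 - Mc = M3 by omega, h33]
    · -- containment
      intro i' hi'
      by_cases h1 : i' ≤ M1
      · obtain ⟨t, _, ht2, hgt⟩ := h15 i' h1
        exact ⟨t, by omega, by rw [hg, wglue_left g1 M1 g2 hcomp12 i' h1, hgt]⟩
      · rw [hg, wglue_right g1 M1 g2 i' (by omega)]
        by_cases h2 : i' - M1 ≤ Mc
        · obtain ⟨t, ht, hct⟩ := hccont' (i' - M1) h2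
          exact ⟨t, ht, by rw [hg2, wglue_left cyc Mc g3 hcomp2 _ h2, hct]⟩
        · obtain ⟨t, _, ht2, hgt⟩ := h37 (i' - M1 - Mc) (by omega)
          exact ⟨t, ht2, by rw [hg2, wglue_right cyc Mc g3 _ (by omega), hgt]⟩
    · -- the positive cycle at offset M1
      have hval : ∀ l, l ≤ Mc → g (M1 + l) = cyc l := by
        intro l hl
        rw [hg, wglue_right g1 M1 g2 _ (by omega), show M1 + l - M1 = l by omega,
            hg2, wglue_left cyc Mc g3 hcomp2 l hl]
      refine ⟨M1, M1 + Mc, by omega, by omega, ?_, ?_⟩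
      · have a0 := hval 0 (by omega)
        rw [show M1 + 0 = M1 by omega] at a0
        rw [a0, hval Mc le_rfl, hcc]
      · have e1 : pathCost G g M1 (M1 + Mc) = pathCost G cyc 0 Mc := by
          have hsh := pathCost_shift G g M1 0 Mc
          rw [show 0 + M1 = M1 by omega, show Mc + M1 = M1 + Mc by omega] at hsh
          rw [hsh]
          apply pathCost_congr
          intro l hl1 hl2
          rw [show l + M1 = M1 + l by omega, hval l hl2]
        rw [e1]
        exact hcpos
    · -- waypoint β
      refine ⟨M1 + (Mc + N3), by omega, ?_⟩
      rw [hg, wglue_right g1 M1 g2 _ (by omega), show M1 + (Mc + N3) - M1 = Mc + N3 by omega,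
          hg2, wglue_right cyc Mc g3 _ (by omega), show Mc + N3 - Mc = N3 by omega, h35]
  · -- SW2(0→β→σ) ++ cyc ++ SW(σ→L)
    obtain ⟨g1, M1, N1, h11, h12, h13, h14, h15, h16, h17⟩ :=
      shortSegment2 G w L hw 0 β σ (by omega) hβσ hσL
    obtain ⟨g3, M3, h31, h32, h33, h34, h35⟩ := shortSegment G w L hw σ L hσL le_rfl
    have hcomp2 : cyc Mc = g3 0 := by rw [hcycM, h32]
    set g2 := wglue cyc Mc g3 with hg2
    have h2w : IsWalk G g2 (Mc + M3) := wglue_isWalk G cyc Mc g3 M3 hcw h31 hcomp2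
    have hcomp12 : g1 M1 = g2 0 := by
      rw [hg2, wglue_left cyc Mc g3 hcomp2 0 (by omega), h13, hcyc0']
    set g := wglue g1 M1 g2 with hg
    refine ⟨g, M1 + (Mc + M3), wglue_isWalk G g1 M1 g2 (Mc + M3) h11 h2w hcomp12, ?_, ?_, by omega, ?_, ?_, ?_⟩
    · rw [hg, wglue_left g1 M1 g2 hcomp12 0 (by omega), h12]
    · rw [hg, wglue_right g1 M1 g2 _ (by omega), show M1 + (Mc + M3) - M1 = Mc + M3 by omega,
          hg2, wglue_right cyc Mc g3 _ (by omega), show Mc + M3 - Mc = M3 by omega, h33]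
    · intro i' hi'
      by_cases h1 : i' ≤ M1
      · obtain ⟨t, _, ht2, hgt⟩ := h17 i' h1
        exact ⟨t, by omega, by rw [hg, wglue_left g1 M1 g2 hcomp12 i' h1, hgt]⟩
      · rw [hg, wglue_right g1 M1 g2 i' (by omega)]
        by_cases h2 : i' - M1 ≤ Mc
        · obtain ⟨t, ht, hct⟩ := hccont' (i' - M1) h2
          exact ⟨t, ht, by rw [hg2, wglue_left cyc Mc g3 hcomp2 _ h2, hct]⟩
        · obtain ⟨t, _, ht2, hgt⟩ := h35 (i' - M1 - Mc) (by omega)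
          exact ⟨t, by omega, by rw [hg2, wglue_right cyc Mc g3 _ (by omega), hgt]⟩
    · have hval : ∀ l, l ≤ Mc → g (M1 + l) = cyc l := by
        intro l hl
        rw [hg, wglue_right g1 M1 g2 _ (by omega), show M1 + l - M1 = l by omega,
            hg2, wglue_left cyc Mc g3 hcomp2 l hl]
      refine ⟨M1, M1 + Mc, by omega, by omega, ?_, ?_⟩
      · have a0 := hval 0 (by omega)
        rw [show M1 + 0 = M1 by omega] at a0
        rw [a0, hval Mc le_rfl, hcc]
      · have e1 : pathCost G g M1 (M1 + Mc) = pathCost G cyc 0 Mc := by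
          have hsh := pathCost_shift G g M1 0 Mc
          rw [show 0 + M1 = M1 by omega, show Mc + M1 = M1 + Mc by omega] at hsh
          rw [hsh]
          apply pathCost_congr
          intro l hl1 hl2
          rw [show l + M1 = M1 + l by omega, hval l hl2]
        rw [e1]
        exact hcpos
    · refine ⟨N1, by omega, ?_⟩
      rw [hg, wglue_left g1 M1 g2 hcomp12 N1 h14, h15]

end Aux2
section Aux3

variable {V : Type} (G : CBG V)

lemma label_const (π : ℕ → V) (t : ℕ) :
    ∀ l, t ≤ l → (∀ k, t < k → k ≤ l → ¬ Changepoint G π k) →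
      G.label (π l) = G.label (π t) := by
  intro l
  induction l with
  | zero =>
    intro h _
    have ht : t = 0 := by omega
    rw [ht]
  | succ l IH =>
    intro hl hk
    by_cases hlt : t = l + 1
    · rw [hlt]
    · have h1 : G.label (π (l+1)) = G.label (π l) := by
        have := hk (l+1) (by omega) le_rfl
        rw [cp_iff_of_pos G π (by omega)] at this
        push_neg at this
        simpa using this.symm
      rw [h1]
      exact IH (by omega) (fun k h1 h2 => hk k h1 (by omega))

lemma cp_congr_vals (π₁ π₂ : ℕ → V) {l l' : ℕ} (hl : 0 < l) (hl' : 0 < l')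
    (h1 : π₁ (l - 1) = π₂ (l' - 1)) (h2 : π₁ l = π₂ l') :
    Changepoint G π₁ l ↔ Changepoint G π₂ l' := by
  rw [cp_iff_of_pos G π₁ hl, cp_iff_of_pos G π₂ hl', h1, h2]

/-- Splicing out a chunk between two changepoints carrying the same vertex. -/
lemma splice (π : ℕ → V) (hπ : InitPumpFair G π) (s s' : ℕ) (hss : s < s')
    (hcs : Changepoint G π s) (hcs' : Changepoint G π s') (heq : π s = π s') :
    InitPumpFair G (fun l => if l < s then π l else π (l + (s' - s))) ∧
    (∀ l, l ≤ s → (fun l => if l < s then π l else π (l + (s' - s))) l = π l) ∧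
    (∀ l, s ≤ l → (fun l => if l < s then π l else π (l + (s' - s))) l = π (l + (s' - s))) ∧
    (∀ l, l ≤ s → (Changepoint G (fun l => if l < s then π l else π (l + (s' - s))) l ↔ Changepoint G π l)) ∧
    (∀ l, s ≤ l → (Changepoint G (fun l => if l < s then π l else π (l + (s' - s))) l ↔ Changepoint G π (l + (s' - s)))) := by
  obtain ⟨⟨hinit, hedge⟩, hpump, hfair⟩ := hπ
  set d := s' - s with hd
  set π₁ : ℕ → V := fun l => if l < s then π l else π (l + d) with hπ₁
  have hlow : ∀ l, l ≤ s → π₁ l = π l := by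
    intro l hl
    by_cases h : l < s
    · simp [hπ₁, h]
    · have : l = s := by omega
      rw [this]
      simp only [hπ₁, if_neg (lt_irrefl s)]
      rw [show s + d = s' by omega, ← heq]
  have hhigh : ∀ l, s ≤ l → π₁ l = π (l + d) := by
    intro l hl
    by_cases h : l < s
    · omega
    · simp [hπ₁, h]
  have hcplow : ∀ l, l ≤ s → (Changepoint G π₁ l ↔ Changepoint G π l) := by
    intro l hl
    rcases Nat.eq_zero_or_pos l with h0 | h0
    · rw [h0]; exact iff_of_true (cp_zero G π₁) (cp_zero G π)
    · exact cp_congr_vals G π₁ π h0 h0 (hlow (l-1) (by omega)) (hlow l hl)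
  have hcphigh : ∀ l, s ≤ l → (Changepoint G π₁ l ↔ Changepoint G π (l + d)) := by
    intro l hl
    rcases Nat.eq_zero_or_pos l with h0 | h0
    · subst h0
      refine iff_of_true (cp_zero G π₁) ?_
      rw [show 0 + d = s' by omega]
      exact hcs'
    · by_cases hls : l = s
      · have hcsl : Changepoint G π l := by rw [hls]; exact hcs
        have h1 : Changepoint G π₁ l ↔ Changepoint G π l :=
          cp_congr_vals G π₁ π h0 h0 (hlow (l-1) (by omega)) (hlow l (by omega))
        refine iff_of_true (h1.mpr hcsl) ?_
        rw [show l + d = s' by omega]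
        exact hcs'
      · exact cp_congr_vals G π₁ π h0 (by omega)
          (by rw [hhigh (l-1) (by omega)]; congr 1; omega)
          (hhigh l hl)
  refine ⟨⟨⟨?_, ?_⟩, ?_, ?_⟩, hlow, hhigh, hcplow, hcphigh⟩
  · rw [hlow 0 (by omega), hinit]
  · intro l
    by_cases h : l + 1 ≤ s
    · rw [hlow l (by omega), hlow (l+1) h]
      exact hedge l
    · rw [hhigh l (by omega), hhigh (l+1) (by omega)]
      rw [show l + 1 + d = l + d + 1 by omega]
      exact hedge (l + d)
  · -- Pumpable
    intro μ μ' hcμ hcμ' hμμ hno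
    by_cases hc1 : μ' ≤ s
    · -- fully low
      obtain ⟨i, j, hi, hij, hj, hveq, hcost⟩ :=
        hpump μ μ' ((hcplow μ (by omega)).mp hcμ) ((hcplow μ' hc1).mp hcμ')
          hμμ (fun l h1 h2 => fun hc => hno l h1 h2 ((hcplow l (by omega)).mpr hc))
      refine ⟨i, j, hi, hij, hj, ?_, ?_⟩
      · rw [hlow i (by omega), hlow j (by omega), hveq]
      · rw [pathCost_congr G π₁ π (fun l h1 h2 => hlow l (by omega))]
        exact hcost
    · by_cases hc2 : s ≤ μ
      · -- fully high
        obtain ⟨i, j, hi, hij, hj, hveq, hcost⟩ :=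
          hpump (μ + d) (μ' + d) ((hcphigh μ hc2).mp hcμ) ((hcphigh μ' (by omega)).mp hcμ')
            (by omega) (fun l h1 h2 => fun hc => hno (l - d) (by omega) (by omega)
              (by
                have : Changepoint G π₁ (l - d) ↔ Changepoint G π l := by
                  have := hcphigh (l - d) (by omega)
                  rw [show l - d + d = l by omega] at this
                  exact this
                exact this.mpr hc))
        refine ⟨i - d, j - d, by omega, by omega, by omega, ?_, ?_⟩
        · rw [hhigh (i - d) (by omega), hhigh (j - d) (by omega),
              show i - d + d = i by omega, show j - d + d = j by omega, hveq]
        · have e1 : pathCost G π i j = pathCost G π₁ (i - d) (j - d) := by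
            have hsh := pathCost_shift G π d (i - d) (j - d)
            rw [show i - d + d = i by omega, show j - d + d = j by omega] at hsh
            rw [hsh]
            apply pathCost_congr
            intro l h1 h2
            rw [hhigh l (by omega)]
          rw [← e1]
          exact hcost
      · -- straddle: impossible
        exfalso
        have : Changepoint G π₁ s := (hcplow s le_rfl).mpr hcs
        exact hno s (by omega) (by omega) this
  · -- Fair
    intro N
    obtain ⟨n, hn, hacc⟩ := hfair (N + d + s')
    refine ⟨n - d, by omega, ?_⟩
    rw [hhigh (n - d) (by omega), show n - d + d = n by omega]
    exact hacc

end Aux3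
section Aux4

variable {V : Type} (G : CBG V)

/-- Replacing a block (maximal constant-label infix) by a shorter walk with the
same endpoints, same label, and an internal positive-cost cycle. -/
lemma blockReplace (π : ℕ → V) (hπ : InitPumpFair G π) (t t' : ℕ) (htt : t < t')
    (hct : Changepoint G π t) (hct' : Changepoint G π t')
    (g : ℕ → V) (M : ℕ) (hgw : IsWalk G g M)
    (hg0 : g 0 = π t) (hgM : g M = π (t' - 1))
    (hglab : ∀ i, i ≤ M → G.label (g i) = G.label (π t))
    (hgpump : ∃ x y, x < y ∧ y ≤ M ∧ g x = g y ∧ 0 < pathCost G g x y)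
    (hMt : t + M + 1 ≤ t') :
    InitPumpFair G (fun l => if l < t then π l else if l ≤ t + M then g (l - t) else π (l + (t' - 1 - (t + M)))) ∧
    (∀ l, l ≤ t → (fun l => if l < t then π l else if l ≤ t + M then g (l - t) else π (l + (t' - 1 - (t + M)))) l = π l) ∧
    (∀ i, i ≤ M → (fun l => if l < t then π l else if l ≤ t + M then g (l - t) else π (l + (t' - 1 - (t + M)))) (t + i) = g i) ∧
    (∀ l, t + M ≤ l → (fun l => if l < t then π l else if l ≤ t + M then g (l - t) else π (l + (t' - 1 - (t + M)))) l = π (l + (t' - 1 - (t + M)))) ∧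
    (∀ l, l ≤ t → (Changepoint G (fun l => if l < t then π l else if l ≤ t + M then g (l - t) else π (l + (t' - 1 - (t + M)))) l ↔ Changepoint G π l)) ∧
    (∀ l, t + M + 1 ≤ l → (Changepoint G (fun l => if l < t then π l else if l ≤ t + M then g (l - t) else π (l + (t' - 1 - (t + M)))) l ↔ Changepoint G π (l + (t' - 1 - (t + M))))) := by
  obtain ⟨⟨hinit, hedge⟩, hpump, hfair⟩ := hπ
  set e := t' - 1 - (t + M) with he
  set π₂ : ℕ → V := fun l => if l < t then π l else if l ≤ t + M then g (l - t) else π (l + e) with hπ₂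
  have hlow : ∀ l, l ≤ t → π₂ l = π l := by
    intro l hl
    by_cases h : l < t
    · simp [hπ₂, h]
    · have hlt : l = t := by omega
      simp only [hπ₂, if_neg (by omega : ¬ l < t), if_pos (by omega : l ≤ t + M)]
      rw [hlt]
      simpa using hg0
  have hmid : ∀ i, i ≤ M → π₂ (t + i) = g i := by
    intro i hi
    simp only [hπ₂, if_neg (by omega : ¬ t + i < t), if_pos (by omega : t + i ≤ t + M)]
    congr 1
    omega
  have hhigh : ∀ l, t + M ≤ l → π₂ l = π (l + e) := by
    intro l hl
    by_cases h : l = t + M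
    · rw [h]
      have := hmid M le_rfl
      rw [this, hgM]
      congr 1
      omega
    · simp only [hπ₂, if_neg (by omega : ¬ l < t), if_neg (by omega : ¬ l ≤ t + M)]
  have hcplow : ∀ l, l ≤ t → (Changepoint G π₂ l ↔ Changepoint G π l) := by
    intro l hl
    rcases Nat.eq_zero_or_pos l with h0 | h0
    · rw [h0]; exact iff_of_true (cp_zero G π₂) (cp_zero G π)
    · exact cp_congr_vals G π₂ π h0 h0 (hlow (l-1) (by omega)) (hlow l hl)
  have hcpmid : ∀ l, t < l → l ≤ t + M → ¬ Changepoint G π₂ l := by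
    intro l h1 h2 hc
    rw [cp_iff_of_pos G π₂ (by omega)] at hc
    apply hc
    have e1 : π₂ (l - 1) = g (l - 1 - t) := by
      have := hmid (l - 1 - t) (by omega)
      rw [show t + (l - 1 - t) = l - 1 by omega] at this
      exact this
    have e2 : π₂ l = g (l - t) := by
      have := hmid (l - t) (by omega)
      rw [show t + (l - t) = l by omega] at this
      exact this
    rw [e1, e2, hglab (l - 1 - t) (by omega), hglab (l - t) (by omega)]
  have hcphigh : ∀ l, t + M + 1 ≤ l → (Changepoint G π₂ l ↔ Changepoint G π (l + e)) := by
    intro l hl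
    refine cp_congr_vals G π₂ π (by omega) (by omega) ?_ (hhigh l (by omega))
    rw [hhigh (l-1) (by omega)]
    congr 1
    omega
  have hcpseam : Changepoint G π₂ (t + M + 1) := by
    rw [hcphigh (t + M + 1) le_rfl, show t + M + 1 + e = t' by omega]
    exact hct'
  refine ⟨⟨⟨?_, ?_⟩, ?_, ?_⟩, hlow, hmid, hhigh, hcplow, hcphigh⟩
  · rw [hlow 0 (by omega), hinit]
  · intro l
    by_cases h1 : l + 1 ≤ t
    · rw [hlow l (by omega), hlow (l+1) h1]
      exact hedge l
    · by_cases h2 : l + 1 ≤ t + M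
      · have e1 : π₂ l = g (l - t) := by
          have := hmid (l - t) (by omega)
          rw [show t + (l - t) = l by omega] at this
          exact this
        have e2 : π₂ (l + 1) = g (l - t + 1) := by
          have := hmid (l - t + 1) (by omega)
          rw [show t + (l - t + 1) = l + 1 by omega] at this
          exact this
        rw [e1, e2]
        exact hgw (l - t) (by omega)
      · rw [hhigh l (by omega), hhigh (l + 1) (by omega),
            show l + 1 + e = l + e + 1 by omega]
        exact hedge (l + e)
  · -- Pumpable
    intro μ μ' hcμ hcμ' hμμ hno
    by_cases hc1 : μ' ≤ t
    · obtain ⟨i, j, hi, hij, hj, hveq, hcost⟩ :=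
        hpump μ μ' ((hcplow μ (by omega)).mp hcμ) ((hcplow μ' hc1).mp hcμ')
          hμμ (fun l h1 h2 => fun hc => hno l h1 h2 ((hcplow l (by omega)).mpr hc))
      refine ⟨i, j, hi, hij, hj, ?_, ?_⟩
      · rw [hlow i (by omega), hlow j (by omega), hveq]
      · rw [pathCost_congr G π₂ π (fun l h1 h2 => hlow l (by omega))]
        exact hcost
    · by_cases hc2 : t + M + 1 ≤ μ
      · -- fully high
        obtain ⟨i, j, hi, hij, hj, hveq, hcost⟩ :=
          hpump (μ + e) (μ' + e) ((hcphigh μ hc2).mp hcμ) ((hcphigh μ' (by omega)).mp hcμ')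
            (by omega) (fun l h1 h2 => fun hc => hno (l - e) (by omega) (by omega)
              (by
                have hl : t + M + 1 ≤ l - e := by omega
                have := hcphigh (l - e) hl
                rw [show l - e + e = l by omega] at this
                exact this.mpr hc))
        refine ⟨i - e, j - e, by omega, by omega, by omega, ?_, ?_⟩
        · rw [hhigh (i - e) (by omega), hhigh (j - e) (by omega),
              show i - e + e = i by omega, show j - e + e = j by omega, hveq]
        · have e1 : pathCost G π i j = pathCost G π₂ (i - e) (j - e) := by
            have hsh := pathCost_shift G π e (i - e) (j - e)
            rw [show i - e + e = i by omega, show j - e + e = j by omega] at hsh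
            rw [hsh]
            apply pathCost_congr
            intro l h1 h2
            rw [hhigh l (by omega)]
          rw [← e1]
          exact hcost
      · -- μ ≤ t + M
        by_cases hc3 : μ ≤ t
        · by_cases hc4 : μ = t
          · -- the replaced block
            have hμ' : μ' = t + M + 1 := by
              by_contra hne
              rcases Nat.lt_or_ge μ' (t + M + 1) with h | h
              · exact hcpmid μ' (by omega) (by omega) hcμ'
              · exact hno (t + M + 1) (by omega) (by omega) hcpseam
            obtain ⟨x, y, hxy, hyM, hgeq, hgcost⟩ := hgpump
            refine ⟨t + x, t + y, by omega, by omega, by omega, ?_, ?_⟩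
            · rw [hmid x (by omega), hmid y hyM, hgeq]
            · have e1 : pathCost G π₂ (t + x) (t + y) = pathCost G g x y := by
                have hsh := pathCost_shift G π₂ t x y
                rw [show x + t = t + x by omega, show y + t = t + y by omega] at hsh
                rw [hsh]
                apply pathCost_congr
                intro l h1 h2
                rw [show l + t = t + l by omega, hmid l (by omega)]
              rw [e1]
              exact hgcost
          · -- μ < t < μ' : impossible
            exfalso
            exact hno t (by omega) (by omega) ((hcplow t le_rfl).mpr hct)
        · -- t < μ ≤ t + M : impossible
          exfalso
          exact hcpmid μ (by omega) (by omega) hcμ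
  · -- Fair
    intro N
    obtain ⟨n, hn, hacc⟩ := hfair (N + e + t')
    refine ⟨n - e, by omega, ?_⟩
    rw [hhigh (n - e) (by omega), show n - e + e = n by omega]
    exact hacc

end Aux4
section Aux5

variable {V : Type} (G : CBG V)

lemma periodicPumpable (π : ℕ → V) (a q : ℕ) (hq : 0 < q)
    (hper : ∀ l, a ≤ l → π (l + q) = π l)
    (hbase : ∀ m m', Changepoint G π m → Changepoint G π m' → m < m' →
      (∀ l, m < l → l < m' → ¬ Changepoint G π l) → m ≤ a + q →
      ∃ i j, m ≤ i ∧ i < j ∧ j ≤ m' - 1 ∧ π i = π j ∧ 0 < pathCost G π i j) :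
    Pumpable G π := by
  have hS : ∀ l, a + 1 ≤ l → (Changepoint G π (l + q) ↔ Changepoint G π l) := by
    intro l hl
    refine cp_congr_vals G π π (by omega) (by omega) ?_ (hper l (by omega))
    rw [show l + q - 1 = (l - 1) + q by omega]
    exact hper (l - 1) (by omega)
  intro m
  induction m using Nat.strong_induction_on with
  | _ m IH =>
    intro m' hcm hcm' hmm hno
    by_cases hm : m ≤ a + q
    · exact hbase m m' hcm hcm' hmm hno hm
    · have hm1 : a + q + 1 ≤ m := by omega
      have hcmq : Changepoint G π (m + q) := (hS m (by omega)).mpr hcm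
      have hm' : m' ≤ m + q := by
        by_contra h
        exact hno (m + q) (by omega) (by omega) hcmq
      have hcdown : Changepoint G π (m - q) := by
        have := hS (m - q) (by omega)
        rw [show m - q + q = m by omega] at this
        exact this.mp hcm
      have hcdown' : Changepoint G π (m' - q) := by
        have := hS (m' - q) (by omega)
        rw [show m' - q + q = m' by omega] at this
        exact this.mp hcm'
      have hnod : ∀ l, m - q < l → l < m' - q → ¬ Changepoint G π l := by
        intro l h1 h2 hc
        exact hno (l + q) (by omega) (by omega) ((hS l (by omega)).mpr hc)
      obtain ⟨i, j, hi, hij, hj, hveq, hcost⟩ :=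
        IH (m - q) (by omega) (m' - q) hcdown hcdown' (by omega) hnod
      refine ⟨i + q, j + q, by omega, by omega, by omega, ?_, ?_⟩
      · rw [hper i (by omega), hper j (by omega), hveq]
      · have e1 : pathCost G π (i + q) (j + q) = pathCost G π i j := by
          rw [pathCost_shift G π q i j]
          apply pathCost_congr
          intro l h1 h2
          exact hper l (by omega)
        rw [e1]
        exact hcost

lemma mod_succ_case (x q : ℕ) (hq : 0 < q) :
    ((x + 1) % q = x % q + 1 ∧ x % q + 1 < q) ∨ ((x + 1) % q = 0 ∧ x % q + 1 = q) := by
  have hlt : x % q < q := Nat.mod_lt _ hq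
  have hdm : q * (x / q) + x % q = x := Nat.div_add_mod x q
  by_cases h : x % q + 1 = q
  · right
    refine ⟨?_, h⟩
    have hmul : q * (x / q + 1) = q * (x / q) + q := by ring
    have : x + 1 = q * (x / q + 1) := by omega
    rw [this, Nat.mul_mod_right]
  · left
    have hlt' : x % q + 1 < q := by omega
    have : x + 1 = q * (x / q) + (x % q + 1) := by omega
    rw [this, Nat.mul_add_mod, Nat.mod_eq_of_lt hlt']
    exact ⟨rfl, hlt'⟩

/-- Wrapping a finite walk whose end equals the vertex at position `a`
into an ultimately periodic infinite path. -/
lemma loopPath (f : ℕ → V) (a q : ℕ) (hq : 0 < q)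
    (hw : IsWalk G f (a + q)) (hfix : f (a + q) = f a) :
    (∀ l, l < a + q → (fun l => if l < a + q then f l else f (a + (l - a) % q)) l = f l) ∧
    (∀ l, a ≤ l → (fun l => if l < a + q then f l else f (a + (l - a) % q)) l = f (a + (l - a) % q)) ∧
    (∀ l, a ≤ l → (fun l => if l < a + q then f l else f (a + (l - a) % q)) (l + q) = (fun l => if l < a + q then f l else f (a + (l - a) % q)) l) ∧
    (∀ l, G.edge ((fun l => if l < a + q then f l else f (a + (l - a) % q)) l) ((fun l => if l < a + q then f l else f (a + (l - a) % q)) (l + 1))) := by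
  set π' : ℕ → V := fun l => if l < a + q then f l else f (a + (l - a) % q) with hπ'
  have h1 : ∀ l, l < a + q → π' l = f l := by
    intro l hl
    simp [hπ', hl]
  have h2 : ∀ l, a ≤ l → π' l = f (a + (l - a) % q) := by
    intro l hl
    by_cases h : l < a + q
    · rw [h1 l h]
      congr 1
      rw [Nat.mod_eq_of_lt (by omega)]
      omega
    · simp [hπ', h]
  have hper : ∀ l, a ≤ l → π' (l + q) = π' l := by
    intro l hl
    rw [h2 (l + q) (by omega), h2 l hl]
    congr 2
    rw [show l + q - a = (l - a) + q by omega, Nat.add_mod_right]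
  refine ⟨h1, h2, hper, ?_⟩
  intro l
  by_cases hl : l + 1 < a + q
  · rw [h1 l (by omega), h1 (l + 1) hl]
    exact hw l (by omega)
  · have hla : a ≤ l := by omega
    rw [h2 l hla, h2 (l + 1) (by omega)]
    rcases mod_succ_case (l - a) q hq with ⟨hc1, hc2⟩ | ⟨hc1, hc2⟩
    · rw [show l + 1 - a = (l - a) + 1 by omega, hc1]
      have := hw (a + (l - a) % q) (by omega)
      rw [show a + (l - a) % q + 1 = a + ((l - a) % q + 1) by omega] at this
      exact this
    · rw [show l + 1 - a = (l - a) + 1 by omega, hc1]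
      have := hw (a + (l - a) % q) (by omega)
      rw [show a + (l - a) % q + 1 = a + q by omega, hfix] at this
      simpa using this
  
end Aux5
section Aux6

open Classical
attribute [local instance] Classical.propDecidable

variable {V : Type} (G : CBG V)

/-- The target: a small ultimately periodic initial pumpable fair path. -/
def Goal [Fintype V] (G : CBG V) : Prop :=
  ∃ (π : ℕ → V) (a q : ℕ), InitPumpFair G π ∧ 0 < q ∧
    a + q ≤ 20 * (Fintype.card V) ^ 2 ∧ ∀ m, a ≤ m → π (m + q) = π m

lemma freq_vertex [Fintype V] (π : ℕ → V) (P : ℕ → Prop)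
    (h : ∀ N, ∃ l, N ≤ l ∧ P l) :
    ∃ v, ∀ N, ∃ l, N ≤ l ∧ P l ∧ π l = v := by
  by_contra hc
  push_neg at hc
  choose Nf hNf using hc
  obtain ⟨l, hl, hP⟩ := h (Finset.univ.sup Nf)
  exact hNf (π l) l (le_trans (Finset.le_sup (Finset.mem_univ (π l))) hl) hP rfl

lemma cp_gap_bound (π : ℕ → V) (B : ℕ) (K : ℕ) :
    ∀ x, Changepoint G π x →
      ((Finset.range x).filter (fun t => Changepoint G π t)).card ≤ K →
      (∀ t t', Changepoint G π t → Changepoint G π t' → t < t' → t' ≤ x →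
        (∀ l, t < l → l < t' → ¬ Changepoint G π l) → t' - t ≤ B) →
      x ≤ K * B := by
  induction K with
  | zero =>
    intro x hx hcard _
    by_contra h
    have hx0 : 0 < x := by omega
    have h0 : 0 ∈ (Finset.range x).filter (fun t => Changepoint G π t) := by
      simp [Finset.mem_filter, Finset.mem_range, hx0, cp_zero G π]
    have := Finset.card_pos.mpr ⟨0, h0⟩
    omega
  | succ K IH =>
    intro x hx hcard hgap
    rcases Nat.eq_zero_or_pos x with h0 | h0
    · omega
    set S := (Finset.range x).filter (fun t => Changepoint G π t) with hS
    have h0S : 0 ∈ S := by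
      simp [hS, Finset.mem_filter, Finset.mem_range, h0, cp_zero G π]
    have hSne : S.Nonempty := ⟨0, h0S⟩
    set t := S.max' hSne with ht
    have htS : t ∈ S := S.max'_mem hSne
    have hct : Changepoint G π t := (Finset.mem_filter.mp htS).2
    have htx : t < x := Finset.mem_range.mp (Finset.mem_filter.mp htS).1
    have hnocp : ∀ l, t < l → l < x → ¬ Changepoint G π l := by
      intro l h1 h2 hc
      have : l ∈ S := by simp [hS, Finset.mem_filter, Finset.mem_range, h2, hc]
      have := S.le_max' l this
      omega
    have hgapx : x - t ≤ B := hgap t x hct hx htx le_rfl hnocp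
    have hsub : (Finset.range t).filter (fun l => Changepoint G π l) ⊆ S.erase t := by
      intro l hl
      rw [Finset.mem_filter, Finset.mem_range] at hl
      rw [Finset.mem_erase]
      refine ⟨by omega, ?_⟩
      simp [hS, Finset.mem_filter, Finset.mem_range, hl.2]
      omega
    have hcard' : ((Finset.range t).filter (fun l => Changepoint G π l)).card ≤ K := by
      have h1 := Finset.card_le_card hsub
      have h2 : (S.erase t).card = S.card - 1 := Finset.card_erase_of_mem htS
      have h3 : 1 ≤ S.card := Finset.card_pos.mpr hSne
      omega
    have hrec : t ≤ K * B :=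
      IH t hct hcard' (fun a b h1 h2 h3 h4 h5 => hgap a b h1 h2 h3 (by omega) h5)
    have : (K + 1) * B = K * B + B := by ring
    omega

end Aux6
section Aux7

variable {V : Type} (G : CBG V)

lemma finishB [Fintype V] (π : ℕ → V) (hπ : InitPumpFair G π) (m am m' : ℕ)
    (hcm : Changepoint G π m) (hcm' : Changepoint G π m') (heq : π m = π m')
    (h1 : m ≤ am) (h2 : am < m') (hacc : G.acc (π am))
    (hbound : m' ≤ 20 * (Fintype.card V) ^ 2) : Goal G := by
  obtain ⟨⟨hinit, hedge⟩, hpump, hfair⟩ := hπ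
  set q := m' - m with hqdef
  have hq : 0 < q := by omega
  have hmq : m + q = m' := by omega
  have hw : IsWalk G π (m + q) := fun i _ => hedge i
  have hfix : π (m + q) = π m := by rw [hmq]; exact heq.symm
  obtain ⟨hv1, hv2, hper, hedge'⟩ := loopPath G π m q hq hw hfix
  set π' : ℕ → V := fun l => if l < m + q then π l else π (m + (l - m) % q) with hπ'
  have Hv1 : ∀ l, l < m' → π' l = π l := by
    intro l hl
    exact hv1 l (by omega)
  have Hv2 : ∀ l, m ≤ l → π' l = π (m + (l - m) % q) := hv2
  have Hper : ∀ l, m ≤ l → π' (l + q) = π' l := hper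
  have hval2 : ∀ l, m' ≤ l → l ≤ m' + q → π' l = π (l - q) := by
    intro l hl1 hl2
    rw [Hv2 l (by omega)]
    by_cases hl : l < m' + q
    · have hr : (l - m) % q = l - m - q := by
        rw [show l - m = (l - m - q) + q by omega, Nat.add_mod_right,
            Nat.mod_eq_of_lt (by omega)]
        omega
      rw [hr]
      congr 1
      omega
    · have hl' : l = m' + q := by omega
      have hr : (l - m) % q = 0 := by
        rw [show l - m = q + q by omega, Nat.add_mod_right, Nat.mod_self]
      rw [hr, show m + 0 = m from rfl, show l - q = m' by omega]
      exact heq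
  have hvm' : π' m' = π m' := by
    rw [hval2 m' le_rfl (by omega), show m' - q = m by omega]
    exact heq
  have hcp_low : ∀ l, l ≤ m' → (Changepoint G π' l ↔ Changepoint G π l) := by
    intro l hl
    rcases Nat.eq_zero_or_pos l with h0 | h0
    · rw [h0]; exact iff_of_true (cp_zero G π') (cp_zero G π)
    · refine cp_congr_vals G π' π h0 h0 (Hv1 (l-1) (by omega)) ?_
      by_cases hlm : l < m'
      · exact Hv1 l hlm
      · have : l = m' := by omega
        rw [this]; exact hvm'
  have hcp_mid : ∀ l, m' + 1 ≤ l → l ≤ m' + q → (Changepoint G π' l ↔ Changepoint G π (l - q)) := by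
    intro l hl1 hl2
    refine cp_congr_vals G π' π (by omega) (by omega) ?_ (hval2 l (by omega) hl2)
    rw [hval2 (l-1) (by omega) (by omega)]
    congr 1
    omega
  have hIPF : InitPumpFair G π' := by
    refine ⟨⟨?_, hedge'⟩, ?_, ?_⟩
    · rw [Hv1 0 (by omega), hinit]
    · -- Pumpable
      apply periodicPumpable G π' m q hq Hper
      intro μ μ' hcμ hcμ' hμμ hno hμle
      rw [hmq] at hμle
      by_cases hcase : μ' ≤ m'
      · obtain ⟨i, j, hi, hij, hj, hveq, hcost⟩ :=
          hpump μ μ' ((hcp_low μ (by omega)).mp hcμ) ((hcp_low μ' hcase).mp hcμ')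
            hμμ (fun l ha hb hc => hno l ha hb ((hcp_low l (by omega)).mpr hc))
        refine ⟨i, j, hi, hij, hj, ?_, ?_⟩
        · rw [Hv1 i (by omega), Hv1 j (by omega), hveq]
        · rw [pathCost_congr G π' π (fun l ha hb => Hv1 l (by omega))]
          exact hcost
      · have hμm' : μ = m' := by
          by_contra hne
          exact hno m' (by omega) (by omega) ((hcp_low m' le_rfl).mpr hcm')
        have hcpm'q : Changepoint G π' (m' + q) := by
          have hiff : Changepoint G π' (m' + q) ↔ Changepoint G π' m' := by
            refine cp_congr_vals G π' π' (by omega) (by omega) ?_ (Hper m' (by omega))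
            rw [show m' + q - 1 = (m' - 1) + q by omega]
            exact Hper (m' - 1) (by omega)
          exact hiff.mpr ((hcp_low m' le_rfl).mpr hcm')
        have hμ'le : μ' ≤ m' + q := by
          by_contra h
          exact hno (m' + q) (by omega) (by omega) hcpm'q
        have hcμ2 : Changepoint G π (μ' - q) := (hcp_mid μ' (by omega) hμ'le).mp hcμ'
        have hint : ∀ l, m < l → l < μ' - q → ¬ Changepoint G π l := by
          intro l ha hb hc
          have : Changepoint G π' (l + q) := by
            refine (hcp_mid (l + q) (by omega) (by omega)).mpr ?_
            rw [show l + q - q = l by omega]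
            exact hc
          exact hno (l + q) (by omega) (by omega) this
        obtain ⟨i, j, hi, hij, hj, hveq, hcost⟩ :=
          hpump m (μ' - q) hcm hcμ2 (by omega) hint
        refine ⟨i + q, j + q, by omega, by omega, by omega, ?_, ?_⟩
        · rw [hval2 (i + q) (by omega) (by omega), hval2 (j + q) (by omega) (by omega),
              show i + q - q = i by omega, show j + q - q = j by omega, hveq]
        · have e1 : pathCost G π' (i + q) (j + q) = pathCost G π i j := by
            rw [pathCost_shift G π' q i j]
            apply pathCost_congr
            intro l ha hb
            rw [hval2 (l + q) (by omega) (by omega), show l + q - q = l by omega]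
          rw [e1]
          exact hcost
    · -- Fair
      intro N
      refine ⟨am + (N + 1) * q, ?_, ?_⟩
      · have : (N + 1) * 1 ≤ (N + 1) * q := Nat.mul_le_mul_left _ hq
        omega
      · rw [Hv2 (am + (N + 1) * q) (by omega),
            show am + (N + 1) * q - m = (am - m) + (N + 1) * q by omega,
            Nat.add_mul_mod_self_right, Nat.mod_eq_of_lt (by omega),
            show m + (am - m) = am by omega]
        exact hacc
  exact ⟨π', m, q, hIPF, hq, by omega, Hper⟩

end Aux7
section Aux8

variable {V : Type} (G : CBG V)

lemma finishA [Fintype V] (π : ℕ → V) (hπ : InitPumpFair G π) (M : ℕ)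
    (hcM : Changepoint G π M) (hlast : ∀ l, M < l → ¬ Changepoint G π l)
    (hbound : M ≤ 4 * (Fintype.card V) ^ 2) : Goal G := by
  obtain ⟨⟨hinit, hedge⟩, hpump, hfair⟩ := hπ
  have hn1 : 1 ≤ Fintype.card V := Fintype.card_pos_iff.mpr ⟨G.init⟩
  have hlab : ∀ l, M ≤ l → G.label (π l) = G.label (π M) := by
    intro l hl
    exact label_const G π M l hl (fun k hk1 _ => hlast k hk1)
  obtain ⟨v, hv⟩ := freq_vertex π (fun l => G.acc (π l)) hfair
  obtain ⟨i, hiM, hiacc, hiv⟩ := hv M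
  obtain ⟨j, hji, hjacc, hjv⟩ := hv (i + 1)
  -- short walk from π M to π i (within the tail)
  have hwt : IsWalk G (fun k => π (M + k)) (i - M) := by
    intro k _
    show G.edge (π (M + k)) (π (M + (k + 1)))
    rw [show M + (k + 1) = (M + k) + 1 by omega]
    exact hedge (M + k)
  obtain ⟨g1, M1, h11, h12, h13, h14, h15⟩ := shortenWalk G _ (i - M) hwt
  have e12 : g1 0 = π M := by simpa using h12
  have e13 : g1 M1 = π i := by
    rw [h13]
    show π (M + (i - M)) = π i
    congr 1
    omega
  -- short cycle at π i through π (i+1) .. π j = π i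
  have hwt2 : IsWalk G (fun k => π (i + 1 + k)) (j - (i + 1)) := by
    intro k _
    show G.edge (π (i + 1 + k)) (π (i + 1 + (k + 1)))
    rw [show i + 1 + (k + 1) = (i + 1 + k) + 1 by omega]
    exact hedge (i + 1 + k)
  obtain ⟨g3, M3, h31, h32, h33, h34, h35⟩ := shortenWalk G _ (j - (i + 1)) hwt2
  have e32 : g3 0 = π (i + 1) := by simpa using h32
  have e33 : g3 M3 = π j := by
    rw [h33]
    show π (i + 1 + (j - (i + 1))) = π j
    congr 1
    omega
  set stepf : ℕ → V := fun k => if k = 0 then π i else π (i + 1) with hstepf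
  have hstep : IsWalk G stepf 1 := by
    intro k hk
    have hk0 : k = 0 := by omega
    rw [hk0]
    show G.edge (stepf 0) (stepf 1)
    simp only [hstepf, if_pos rfl, if_neg (by omega : (1:ℕ) ≠ 0)]
    exact hedge i
  have hcomp : stepf 1 = g3 0 := by
    simp only [hstepf, if_neg (by omega : (1:ℕ) ≠ 0)]
    rw [e32]
  set cyc := wglue stepf 1 g3 with hcycdef
  have hcycw : IsWalk G cyc (1 + M3) := wglue_isWalk G stepf 1 g3 M3 hstep h31 hcomp
  have hcyc0 : cyc 0 = π i := by
    rw [hcycdef, wglue_left stepf 1 g3 hcomp 0 (by omega)]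
    simp [hstepf]
  have hcycE : cyc (1 + M3) = π j := by
    rw [hcycdef, wglue_right stepf 1 g3 (1 + M3) (by omega), show 1 + M3 - 1 = M3 by omega, e33]
  set inner := wglue g1 M1 cyc with hinnerdef
  have hcomp2 : g1 M1 = cyc 0 := by rw [e13, hcyc0]
  have hinnerw : IsWalk G inner (M1 + (1 + M3)) := wglue_isWalk G g1 M1 cyc (1 + M3) h11 hcycw hcomp2
  set f := wglue π M inner with hfdef
  have hcomp3 : π M = inner 0 := by
    rw [hinnerdef, wglue_left g1 M1 cyc hcomp2 0 (by omega), e12]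
  set a := M + M1 with hadef
  set q := 1 + M3 with hqdef
  have hq : 0 < q := by omega
  have hfw : IsWalk G f (a + q) := by
    have hπM : IsWalk G π M := fun l _ => hedge l
    have := wglue_isWalk G π M inner (M1 + (1 + M3)) hπM hinnerw hcomp3
    rwa [show M + (M1 + (1 + M3)) = a + q by omega] at this
  have hfval_pre : ∀ l, l ≤ M → f l = π l := fun l hl =>
    wglue_left π M inner hcomp3 l hl
  have hf_a : f a = π i := by
    rw [hfdef, wglue_right π M inner a (by omega), show a - M = M1 by omega,
        hinnerdef, wglue_left g1 M1 cyc hcomp2 M1 le_rfl, e13]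
  have hf_aq : f (a + q) = π j := by
    rw [hfdef, wglue_right π M inner (a + q) (by omega), show a + q - M = M1 + (1 + M3) by omega,
        hinnerdef, wglue_right g1 M1 cyc (M1 + (1 + M3)) (by omega),
        show M1 + (1 + M3) - M1 = 1 + M3 by omega, hcycE]
  have hfix : f (a + q) = f a := by
    rw [hf_aq, hf_a, hjv, ← hiv]
  have hflab : ∀ l, M ≤ l → l ≤ a + q → G.label (f l) = G.label (π M) := by
    intro l hl1 hl2
    by_cases hlM : l = M
    · rw [hlM, hfval_pre M le_rfl]
    · rw [hfdef, wglue_right π M inner l (by omega)]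
      set x := l - M with hxdef
      by_cases hx1 : x ≤ M1
      · rw [hinnerdef, wglue_left g1 M1 cyc hcomp2 x hx1]
        obtain ⟨t, ht, hgt⟩ := h15 x hx1
        rw [hgt]
        show G.label ((fun k => π (M + k)) t) = G.label (π M)
        exact hlab (M + t) (by omega)
      · rw [hinnerdef, wglue_right g1 M1 cyc x (by omega)]
        set y := x - M1 with hydef
        have hy1 : 1 ≤ y := by omega
        have hy2 : y ≤ 1 + M3 := by omega
        rw [hcycdef, wglue_right stepf 1 g3 y hy1]
        obtain ⟨t, ht, hgt⟩ := h35 (y - 1) (by omega)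
        rw [hgt]
        show G.label ((fun k => π (i + 1 + k)) t) = G.label (π M)
        exact hlab (i + 1 + t) (by omega)
  obtain ⟨hv1, hv2, hper, hedge'⟩ := loopPath G f a q hq hfw hfix
  set π' : ℕ → V := fun l => if l < a + q then f l else f (a + (l - a) % q) with hπ'
  have hMaq : M < a + q := by omega
  have hπ'pre : ∀ l, l ≤ M → π' l = π l := by
    intro l hl
    rw [hv1 l (by omega), hfval_pre l hl]
  have hπ'lab : ∀ l, M ≤ l → G.label (π' l) = G.label (π M) := by
    intro l hl
    by_cases h : l < a + q
    · rw [hv1 l h]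
      exact hflab l hl (by omega)
    · rw [hv2 l (by omega)]
      have hmod : (l - a) % q < q := Nat.mod_lt _ hq
      exact hflab (a + (l - a) % q) (by omega) (by omega)
  have hcp_high : ∀ l, M < l → ¬ Changepoint G π' l := by
    intro l hl hc
    rw [cp_iff_of_pos G π' (by omega)] at hc
    apply hc
    rw [hπ'lab (l - 1) (by omega), hπ'lab l (by omega)]
  have hcp_low : ∀ l, l ≤ M → (Changepoint G π' l ↔ Changepoint G π l) := by
    intro l hl
    rcases Nat.eq_zero_or_pos l with h0 | h0
    · rw [h0]; exact iff_of_true (cp_zero G π') (cp_zero G π)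
    · exact cp_congr_vals G π' π h0 h0 (hπ'pre (l-1) (by omega)) (hπ'pre l hl)
  have hIPF : InitPumpFair G π' := by
    refine ⟨⟨?_, hedge'⟩, ?_, ?_⟩
    · rw [hπ'pre 0 (by omega), hinit]
    · apply periodicPumpable G π' a q hq hper
      intro μ μ' hcμ hcμ' hμμ hno _
      have hμ'M : μ' ≤ M := by
        by_contra h
        exact hcp_high μ' (by omega) hcμ'
      obtain ⟨x, y, hx, hxy, hy, hveq, hcost⟩ :=
        hpump μ μ' ((hcp_low μ (by omega)).mp hcμ) ((hcp_low μ' hμ'M).mp hcμ')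
          hμμ (fun l ha hb hc => hno l ha hb ((hcp_low l (by omega)).mpr hc))
      refine ⟨x, y, hx, hxy, hy, ?_, ?_⟩
      · rw [hπ'pre x (by omega), hπ'pre y (by omega), hveq]
      · rw [pathCost_congr G π' π (fun l ha hb => hπ'pre l (by omega))]
        exact hcost
    · intro N
      refine ⟨a + (N + 1) * q, ?_, ?_⟩
      · have : (N + 1) * 1 ≤ (N + 1) * q := Nat.mul_le_mul_left _ hq
        omega
      · rw [hv2 (a + (N + 1) * q) (by omega), show a + (N + 1) * q - a = (N + 1) * q by omega,
            Nat.mul_mod_left, show a + 0 = a from rfl, hf_a]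
        exact hiacc
  refine ⟨π', a, q, hIPF, hq, ?_, hper⟩
  have hsq : Fintype.card V ≤ Fintype.card V ^ 2 := by
    nlinarith [hn1]
  omega

end Aux8
section Aux9

open Classical
attribute [local instance] Classical.propDecidable

variable {V : Type} (G : CBG V)

lemma shrinkB [Fintype V] : ∀ m' : ℕ, ∀ (π : ℕ → V) (m am : ℕ),
    InitPumpFair G π → Changepoint G π m → Changepoint G π m' → π m = π m' →
    m ≤ am → am < m' → G.acc (π am) → Goal G := by
  intro m'
  induction m' using Nat.strong_induction_on with
  | _ m' IH =>
    intro π m am hπ hcm hcm' heq h1 h2 hacc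
    set n := Fintype.card V with hn
    -- R1: repetition among changepoints in [0, m]
    by_cases hR1 : ∃ t t', t < t' ∧ t' ≤ m ∧ Changepoint G π t ∧ Changepoint G π t' ∧ π t = π t'
    · obtain ⟨t, t', htt, htm, hct, hct', hteq⟩ := hR1
      obtain ⟨hπ₁, hlow, hhigh, hcplow, hcphigh⟩ := splice G π hπ t t' htt hct hct' hteq
      set d := t' - t with hd
      set π₁ : ℕ → V := fun l => if l < t then π l else π (l + d) with hπ₁def
      have hvm : π₁ (m - d) = π m := by
        rw [hhigh (m - d) (by omega)]; congr 1; omega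
      have hvm' : π₁ (m' - d) = π m' := by
        rw [hhigh (m' - d) (by omega)]; congr 1; omega
      have hvam : π₁ (am - d) = π am := by
        rw [hhigh (am - d) (by omega)]; congr 1; omega
      have hcm₁ : Changepoint G π₁ (m - d) := by
        have := hcphigh (m - d) (by omega)
        rw [show m - d + d = m by omega] at this
        exact this.mpr hcm
      have hcm'₁ : Changepoint G π₁ (m' - d) := by
        have := hcphigh (m' - d) (by omega)
        rw [show m' - d + d = m' by omega] at this
        exact this.mpr hcm'
      exact IH (m' - d) (by omega) π₁ (m - d) (am - d) hπ₁ hcm₁ hcm'₁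
        (by rw [hvm, hvm', heq]) (by omega) (by omega) (by rw [hvam]; exact hacc)
    -- R2: repetition among changepoints in [m, am]
    by_cases hR2 : ∃ t t', t < t' ∧ m ≤ t ∧ t' ≤ am ∧ Changepoint G π t ∧ Changepoint G π t' ∧ π t = π t'
    · obtain ⟨t, t', htt, hmt, htam, hct, hct', hteq⟩ := hR2
      obtain ⟨hπ₁, hlow, hhigh, hcplow, hcphigh⟩ := splice G π hπ t t' htt hct hct' hteq
      set d := t' - t with hd
      set π₁ : ℕ → V := fun l => if l < t then π l else π (l + d) with hπ₁def
      have hvm : π₁ m = π m := hlow m hmt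
      have hvm' : π₁ (m' - d) = π m' := by
        rw [hhigh (m' - d) (by omega)]; congr 1; omega
      have hvam : π₁ (am - d) = π am := by
        rw [hhigh (am - d) (by omega)]; congr 1; omega
      have hcm₁ : Changepoint G π₁ m := (hcplow m hmt).mpr hcm
      have hcm'₁ : Changepoint G π₁ (m' - d) := by
        have := hcphigh (m' - d) (by omega)
        rw [show m' - d + d = m' by omega] at this
        exact this.mpr hcm'
      exact IH (m' - d) (by omega) π₁ m (am - d) hπ₁ hcm₁ hcm'₁
        (by rw [hvm, hvm', heq]) (by omega) (by omega) (by rw [hvam]; exact hacc)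
    -- R3: repetition among changepoints in (am, m')
    by_cases hR3 : ∃ t t', t < t' ∧ am < t ∧ t' < m' ∧ Changepoint G π t ∧ Changepoint G π t' ∧ π t = π t'
    · obtain ⟨t, t', htt, hamt, htm', hct, hct', hteq⟩ := hR3
      obtain ⟨hπ₁, hlow, hhigh, hcplow, hcphigh⟩ := splice G π hπ t t' htt hct hct' hteq
      set d := t' - t with hd
      set π₁ : ℕ → V := fun l => if l < t then π l else π (l + d) with hπ₁def
      have hvm : π₁ m = π m := hlow m (by omega)
      have hvm' : π₁ (m' - d) = π m' := by
        rw [hhigh (m' - d) (by omega)]; congr 1; omega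
      have hvam : π₁ am = π am := hlow am (by omega)
      have hcm₁ : Changepoint G π₁ m := (hcplow m (by omega)).mpr hcm
      have hcm'₁ : Changepoint G π₁ (m' - d) := by
        have := hcphigh (m' - d) (by omega)
        rw [show m' - d + d = m' by omega] at this
        exact this.mpr hcm'
      exact IH (m' - d) (by omega) π₁ m am hπ₁ hcm₁ hcm'₁
        (by rw [hvm, hvm', heq]) (by omega) (by omega) (by rw [hvam]; exact hacc)
    -- R4: a long block ending not after m'
    by_cases hR4 : ∃ t t', t < t' ∧ t' ≤ m' ∧ Changepoint G π t ∧ Changepoint G π t' ∧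
        (∀ l, t < l → l < t' → ¬ Changepoint G π l) ∧ 4 * n + 1 ≤ t' - t
    · obtain ⟨t, t', htt, htm', hct, hct', hbno, hlong⟩ := hR4
      obtain ⟨x, y, hx, hxy, hy, hveq, hcost⟩ := hπ.2.1 t t' hct hct' htt hbno
      set L := t' - 1 - t with hL
      set w : ℕ → V := fun k => π (k + t) with hwdef
      have hww : IsWalk G w L := by
        intro k _
        show G.edge (π (k + t)) (π (k + 1 + t))
        rw [show k + 1 + t = (k + t) + 1 by omega]
        exact hπ.1.2 (k + t)
      set β := if t < am ∧ am < t' - 1 then am - t else 0 with hβdef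
      have hβL : β ≤ L := by
        rw [hβdef]
        split
        · omega
        · omega
      have hwx : w (x - t) = w (y - t) := by
        show π (x - t + t) = π (y - t + t)
        rw [show x - t + t = x by omega, show y - t + t = y by omega]
        exact hveq
      have hwcost : 0 < pathCost G w (x - t) (y - t) := by
        have hsh := pathCost_shift G π t (x - t) (y - t)
        rw [show x - t + t = x by omega, show y - t + t = y by omega] at hsh
        show 0 < pathCost G (fun l => π (l + t)) (x - t) (y - t)
        rw [← hsh]
        exact hcost
      obtain ⟨g, Mg, hgw, hg0, hgM, hMg, hgcont, hgpump, i₀, hi₀, hgβ⟩ :=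
        shortBlock G w L hww (x - t) (y - t) (by omega) (by omega) hwx hwcost β hβL
      have hg0' : g 0 = π t := by
        rw [hg0]
        show π (0 + t) = π t
        rw [Nat.zero_add]
      have hgM' : g Mg = π (t' - 1) := by
        rw [hgM]
        show π (L + t) = π (t' - 1)
        congr 1
        omega
      have hglab : ∀ i, i ≤ Mg → G.label (g i) = G.label (π t) := by
        intro i hi
        obtain ⟨s, hs, hgs⟩ := hgcont i hi
        rw [hgs]
        show G.label (π (s + t)) = G.label (π t)
        exact label_const G π t (s + t) (by omega)
          (fun k hk1 hk2 => hbno k hk1 (by omega))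
      have hMt : t + Mg + 1 ≤ t' := by omega
      obtain ⟨hπ₂, hlow₂, hmid₂, hhigh₂, hcplow₂, hcphigh₂⟩ :=
        blockReplace G π hπ t t' htt hct hct' g Mg hgw hg0' hgM' hglab hgpump hMt
      set e := t' - 1 - (t + Mg) with he
      set π₂ : ℕ → V := fun l => if l < t then π l else if l ≤ t + Mg then g (l - t) else π (l + e) with hπ₂def
      have he1 : 1 ≤ e := by omega
      -- position of m
      have hmcases : m ≤ t ∨ t' ≤ m := by
        by_contra h
        push_neg at h
        exact hbno m h.1 h.2 hcm
      -- new m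
      have hm2 : ∃ m₂, m₂ ≤ am ∧ π₂ m₂ = π m ∧ Changepoint G π₂ m₂ ∧
          (m ≤ t → m₂ = m) ∧ (t' ≤ m → m₂ = m - e) := by
        rcases hmcases with hc | hc
        · exact ⟨m, by omega, hlow₂ m hc, (hcplow₂ m hc).mpr hcm, fun _ => rfl, fun h => by omega⟩
        · refine ⟨m - e, by omega, ?_, ?_, fun h => by omega, fun _ => rfl⟩
          · rw [hhigh₂ (m - e) (by omega)]; congr 1; omega
          · have := hcphigh₂ (m - e) (by omega)
            rw [show m - e + e = m by omega] at this
            exact this.mpr hcm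
      obtain ⟨m₂, hm₂am, hvm₂, hcm₂, hm₂low, hm₂high⟩ := hm2
      -- new m'
      have hvm'₂ : π₂ (m' - e) = π m' := by
        rw [hhigh₂ (m' - e) (by omega)]; congr 1; omega
      have hcm'₂ : Changepoint G π₂ (m' - e) := by
        have := hcphigh₂ (m' - e) (by omega)
        rw [show m' - e + e = m' by omega] at this
        exact this.mpr hcm'
      -- new am
      have ham2 : ∃ am₂, m₂ ≤ am₂ ∧ am₂ < m' - e ∧ G.acc (π₂ am₂) := by
        by_cases hamc : t < am ∧ am < t' - 1
        · -- waypoint case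
          have hβam : β = am - t := by rw [hβdef, if_pos hamc]
          have hm2t : m₂ = m := by
            apply hm₂low
            rcases hmcases with hc | hc
            · exact hc
            · omega
          refine ⟨t + i₀, by omega, by omega, ?_⟩
          have : π₂ (t + i₀) = g i₀ := hmid₂ i₀ hi₀
          rw [this, hgβ, hβam]
          show G.acc (π (am - t + t))
          rw [show am - t + t = am by omega]
          exact hacc
        · push_neg at hamc
          rcases Nat.lt_or_ge t am with h' | h'
          · -- am ≥ t' - 1
            have ham' : t' - 1 ≤ am := hamc h'
            refine ⟨am - e, by omega, by omega, ?_⟩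
            have : π₂ (am - e) = π am := by
              rw [hhigh₂ (am - e) (by omega)]; congr 1; omega
            rw [this]; exact hacc
          · -- am ≤ t
            refine ⟨am, by omega, by omega, ?_⟩
            rw [hlow₂ am h']
            exact hacc
      obtain ⟨am₂, ham₂1, ham₂2, ham₂acc⟩ := ham2
      exact IH (m' - e) (by omega) π₂ m₂ am₂ hπ₂ hcm₂ hcm'₂
        (by rw [hvm₂, hvm'₂, heq]) ham₂1 ham₂2 ham₂acc
    -- terminal: bound m' and conclude
    · push_neg at hR1 hR2 hR3 hR4
      have hn1 : 1 ≤ n := Fintype.card_pos_iff.mpr ⟨G.init⟩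
      -- counting changepoints
      have hcard1 : ((Finset.range (m+1)).filter (fun t => Changepoint G π t)).card ≤ n := by
        have hinj : Set.InjOn π ((Finset.range (m+1)).filter (fun t => Changepoint G π t)) := by
          intro a ha b hb hab
          simp only [Finset.coe_filter, Set.mem_setOf_eq, Finset.mem_range] at ha hb
          by_contra hne
          rcases Nat.lt_or_ge a b with h | h
          · exact hR1 a b h (by omega) ha.2 hb.2 hab
          · exact hR1 b a (by omega) (by omega) hb.2 ha.2 hab.symm
        have := Finset.card_le_card_of_injOn π (fun a _ => Finset.mem_univ (π a)) hinj
        simpa using this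
      have hcard2 : ((Finset.Icc m am).filter (fun t => Changepoint G π t)).card ≤ n := by
        have hinj : Set.InjOn π ((Finset.Icc m am).filter (fun t => Changepoint G π t)) := by
          intro a ha b hb hab
          simp only [Finset.coe_filter, Set.mem_setOf_eq, Finset.mem_Icc] at ha hb
          by_contra hne
          rcases Nat.lt_or_ge a b with h | h
          · exact hR2 a b h (by omega) (by omega) ha.2 hb.2 hab
          · exact hR2 b a (by omega) (by omega) (by omega) hb.2 ha.2 hab.symm
        have := Finset.card_le_card_of_injOn π (fun a _ => Finset.mem_univ (π a)) hinj
        simpa using this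
      have hcard3 : ((Finset.Ioo am m').filter (fun t => Changepoint G π t)).card ≤ n := by
        have hinj : Set.InjOn π ((Finset.Ioo am m').filter (fun t => Changepoint G π t)) := by
          intro a ha b hb hab
          simp only [Finset.coe_filter, Set.mem_setOf_eq, Finset.mem_Ioo] at ha hb
          by_contra hne
          rcases Nat.lt_or_ge a b with h | h
          · exact hR3 a b h (by omega) (by omega) ha.2 hb.2 hab
          · exact hR3 b a (by omega) (by omega) (by omega) hb.2 ha.2 hab.symm
        have := Finset.card_le_card_of_injOn π (fun a _ => Finset.mem_univ (π a)) hinj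
        simpa using this
      have hsub : (Finset.range m').filter (fun t => Changepoint G π t) ⊆
          ((Finset.range (m+1)).filter (fun t => Changepoint G π t)) ∪
          ((Finset.Icc m am).filter (fun t => Changepoint G π t)) ∪
          ((Finset.Ioo am m').filter (fun t => Changepoint G π t)) := by
        intro l hl
        rw [Finset.mem_filter, Finset.mem_range] at hl
        rw [Finset.mem_union, Finset.mem_union]
        by_cases hc1 : l ≤ m
        · exact Or.inl (Or.inl (by rw [Finset.mem_filter, Finset.mem_range]; exact ⟨by omega, hl.2⟩))
        · by_cases hc2 : l ≤ am
          · exact Or.inl (Or.inr (by rw [Finset.mem_filter, Finset.mem_Icc]; exact ⟨by omega, hl.2⟩))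
          · exact Or.inr (by rw [Finset.mem_filter, Finset.mem_Ioo]; exact ⟨by omega, hl.2⟩)
      have hcardS : ((Finset.range m').filter (fun t => Changepoint G π t)).card ≤ 3 * n := by
        have h1 := Finset.card_le_card hsub
        have h2 := Finset.card_union_le
          (((Finset.range (m+1)).filter (fun t => Changepoint G π t)) ∪
            ((Finset.Icc m am).filter (fun t => Changepoint G π t)))
          ((Finset.Ioo am m').filter (fun t => Changepoint G π t))
        have h3 := Finset.card_union_le
          ((Finset.range (m+1)).filter (fun t => Changepoint G π t))
          ((Finset.Icc m am).filter (fun t => Changepoint G π t))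
        omega
      have hgap : ∀ t t', Changepoint G π t → Changepoint G π t' → t < t' → t' ≤ m' →
          (∀ l, t < l → l < t' → ¬ Changepoint G π l) → t' - t ≤ 4 * n := by
        intro t t' hct hct' htt htm' hno
        have := hR4 t t' htt htm' hct hct' hno
        omega
      have hm'bound : m' ≤ 3 * n * (4 * n) :=
        cp_gap_bound G π (4 * n) (3 * n) m' hcm' hcardS hgap
      apply finishB G π hπ m am m' hcm hcm' heq h1 h2 hacc
      have e1 : 3 * n * (4 * n) = 12 * n ^ 2 := by ring
      have e2 : n ^ 2 = Fintype.card V ^ 2 := by rw [hn]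
      omega

end Aux9
section Aux10

open Classical
attribute [local instance] Classical.propDecidable

variable {V : Type} (G : CBG V)

lemma shrinkA [Fintype V] : ∀ M : ℕ, ∀ π : ℕ → V,
    InitPumpFair G π → Changepoint G π M → (∀ l, M < l → ¬ Changepoint G π l) →
    Goal G := by
  intro M
  induction M using Nat.strong_induction_on with
  | _ M IH =>
    intro π hπ hcM hlast
    by_cases hR1 : ∃ t t', t < t' ∧ t' ≤ M ∧ Changepoint G π t ∧ Changepoint G π t' ∧ π t = π t'
    · obtain ⟨t, t', htt, htM, hct, hct', hteq⟩ := hR1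
      obtain ⟨hπ₁, hlow, hhigh, hcplow, hcphigh⟩ := splice G π hπ t t' htt hct hct' hteq
      set d := t' - t with hd
      set π₁ : ℕ → V := fun l => if l < t then π l else π (l + d) with hπ₁def
      have hcM₁ : Changepoint G π₁ (M - d) := by
        have := hcphigh (M - d) (by omega)
        rw [show M - d + d = M by omega] at this
        exact this.mpr hcM
      have hlast₁ : ∀ l, M - d < l → ¬ Changepoint G π₁ l := by
        intro l hl hc
        have := hcphigh l (by omega)
        exact hlast (l + d) (by omega) (this.mp hc)
      exact IH (M - d) (by omega) π₁ hπ₁ hcM₁ hlast₁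
    by_cases hR4 : ∃ t t', t < t' ∧ t' ≤ M ∧ Changepoint G π t ∧ Changepoint G π t' ∧
        (∀ l, t < l → l < t' → ¬ Changepoint G π l) ∧ 4 * Fintype.card V + 1 ≤ t' - t
    · obtain ⟨t, t', htt, htM, hct, hct', hbno, hlong⟩ := hR4
      obtain ⟨x, y, hx, hxy, hy, hveq, hcost⟩ := hπ.2.1 t t' hct hct' htt hbno
      set L := t' - 1 - t with hL
      set w : ℕ → V := fun k => π (k + t) with hwdef
      have hww : IsWalk G w L := by
        intro k _
        show G.edge (π (k + t)) (π (k + 1 + t))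
        rw [show k + 1 + t = (k + t) + 1 by omega]
        exact hπ.1.2 (k + t)
      have hwx : w (x - t) = w (y - t) := by
        show π (x - t + t) = π (y - t + t)
        rw [show x - t + t = x by omega, show y - t + t = y by omega]
        exact hveq
      have hwcost : 0 < pathCost G w (x - t) (y - t) := by
        have hsh := pathCost_shift G π t (x - t) (y - t)
        rw [show x - t + t = x by omega, show y - t + t = y by omega] at hsh
        show 0 < pathCost G (fun l => π (l + t)) (x - t) (y - t)
        rw [← hsh]
        exact hcost
      obtain ⟨g, Mg, hgw, hg0, hgM, hMg, hgcont, hgpump, i₀, hi₀, hgβ⟩ :=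
        shortBlock G w L hww (x - t) (y - t) (by omega) (by omega) hwx hwcost 0 (by omega)
      have hg0' : g 0 = π t := by
        rw [hg0]
        show π (0 + t) = π t
        rw [Nat.zero_add]
      have hgM' : g Mg = π (t' - 1) := by
        rw [hgM]
        show π (L + t) = π (t' - 1)
        congr 1
        omega
      have hglab : ∀ i, i ≤ Mg → G.label (g i) = G.label (π t) := by
        intro i hi
        obtain ⟨s, hs, hgs⟩ := hgcont i hi
        rw [hgs]
        show G.label (π (s + t)) = G.label (π t)
        exact label_const G π t (s + t) (by omega)
          (fun k hk1 hk2 => hbno k hk1 (by omega))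
      have hMt : t + Mg + 1 ≤ t' := by omega
      obtain ⟨hπ₂, hlow₂, hmid₂, hhigh₂, hcplow₂, hcphigh₂⟩ :=
        blockReplace G π hπ t t' htt hct hct' g Mg hgw hg0' hgM' hglab hgpump hMt
      set e := t' - 1 - (t + Mg) with he
      set π₂ : ℕ → V := fun l => if l < t then π l else if l ≤ t + Mg then g (l - t) else π (l + e) with hπ₂def
      have he1 : 1 ≤ e := by omega
      have hcM₂ : Changepoint G π₂ (M - e) := by
        have := hcphigh₂ (M - e) (by omega)
        rw [show M - e + e = M by omega] at this
        exact this.mpr hcM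
      have hlast₂ : ∀ l, M - e < l → ¬ Changepoint G π₂ l := by
        intro l hl hc
        have := hcphigh₂ l (by omega)
        exact hlast (l + e) (by omega) (this.mp hc)
      exact IH (M - e) (by omega) π₂ hπ₂ hcM₂ hlast₂
    · push_neg at hR1 hR4
      have hcard : ((Finset.range M).filter (fun t => Changepoint G π t)).card ≤ Fintype.card V := by
        have hinj : Set.InjOn π ((Finset.range M).filter (fun t => Changepoint G π t)) := by
          intro a ha b hb hab
          simp only [Finset.coe_filter, Set.mem_setOf_eq, Finset.mem_range] at ha hb
          by_contra hne
          rcases Nat.lt_or_ge a b with h | h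
          · exact hR1 a b h (by omega) ha.2 hb.2 hab
          · exact hR1 b a (by omega) (by omega) hb.2 ha.2 hab.symm
        have := Finset.card_le_card_of_injOn π (fun a _ => Finset.mem_univ (π a)) hinj
        simpa using this
      have hgap : ∀ t t', Changepoint G π t → Changepoint G π t' → t < t' → t' ≤ M →
          (∀ l, t < l → l < t' → ¬ Changepoint G π l) → t' - t ≤ 4 * Fintype.card V := by
        intro t t' hct hct' htt htM hno
        have := hR4 t t' htt htM hct hct' hno
        omega
      have hMbound : M ≤ Fintype.card V * (4 * Fintype.card V) :=
        cp_gap_bound G π (4 * Fintype.card V) (Fintype.card V) M hcM hcard hgap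
      apply finishA G π hπ M hcM hlast
      have : Fintype.card V * (4 * Fintype.card V) = 4 * Fintype.card V ^ 2 := by ring
      omega

end Aux10
section Main

variable {V : Type}

lemma mainGoal [Fintype V] (G : CBG V) (h : ∃ π, InitPumpFair G π) : Goal G := by
  obtain ⟨π, hπ⟩ := h
  by_cases hfin : ∃ M, Changepoint G π M ∧ ∀ l, M < l → ¬ Changepoint G π l
  · obtain ⟨M, h1, h2⟩ := hfin
    exact shrinkA G M π hπ h1 h2
  · push_neg at hfin
    have hinf : ∀ N, ∃ l, N ≤ l ∧ Changepoint G π l := by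
      intro N
      induction N with
      | zero => exact ⟨0, le_rfl, cp_zero G π⟩
      | succ N IHN =>
        obtain ⟨l, hl, hcl⟩ := IHN
        obtain ⟨l', hl', hcl'⟩ := hfin l hcl
        exact ⟨l', by omega, hcl'⟩
    obtain ⟨v, hv⟩ := freq_vertex π (fun l => Changepoint G π l) hinf
    obtain ⟨m, _, hcm, hmv⟩ := hv 0
    obtain ⟨am, ham, hacc⟩ := hπ.2.2 m
    obtain ⟨m'', hm'', hcm', hm'v⟩ := hv (am + 1)
    exact shrinkB G m'' π m am hπ hcm hcm' (by rw [hmv, hm'v]) ham (by omega) hacc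

end Main

end CBG

/-- there is a constant `c` such that every colored Büchi graph with
costs with `n` vertices that has an initial pumpable fair path also has one of the
ultimately periodic form `π₀ π₁^ω` with `|π₀ π₁| ≤ c · n²`. -/
theorem pumpable_nonemptiness_small_witness :
    ∃ c : ℕ, ∀ (V : Type) [Fintype V] (G : CBG V),
      (∃ π, CBG.InitPumpFair G π) →
      ∃ (π : ℕ → V) (a q : ℕ), CBG.InitPumpFair G π ∧ 0 < q ∧
        a + q ≤ c * (Fintype.card V) ^ 2 ∧
        ∀ m, a ≤ m → π (m + q) = π m := by
  refine ⟨20, ?_⟩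
  intro V _ G h
  exact CBG.mainGoal G h
end

section
/- There is a constant c such that the following holds: for every transition system S and every cPLTL_G formula φ, if S does not satisfy φ with respect to every variable valuation, then there is a valuation α with α(z) ≤ 2^{c·|φ|} · |S| · W for every variable z such that S does not satisfy φ with respect to α, where |S| is the number of states of S and W is the maximal cost occurring in S (i.e., a violating valuation exists that is bounded exponentially in the size of φ and linearly in the number of states and the maximal cost). -/
/-- A transition system with costs: a finite directed graph in which every state has
a successor, with an initial state, a labeling by sets of atomic propositions, and a
cost function on edges, such that the distinguished proposition `κ` holds at a state
iff every incoming edge has non-zero cost. -/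
structure TransSys (P : Type) (κ : P) (S : Type) where
  init : S
  edge : S → S → Prop
  succ : ∀ s, ∃ s', edge s s'
  label : S → Set P
  cost : S → S → ℕ
  kappa_spec : ∀ s s', edge s s' → (0 < cost s s' ↔ κ ∈ label s')

namespace TransSys

variable {P S : Type} {κ : P}

/-- The cost-trace of a path through the transition system. -/
def traceOf (T : TransSys P κ S) (π : ℕ → S) : Trace P :=
  ⟨fun n => T.label (π n), fun n => T.cost (π n) (π (n + 1))⟩

/-- `T` satisfies `φ` with respect to `α` if the trace of every path through `T`
satisfies `φ` with respect to `α`. -/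
def Satisfies {Var : Type} (T : TransSys P κ S) (φ : CPLTL P Var) (α : Var → ℕ) : Prop :=
  ∀ π : ℕ → S, π 0 = T.init → (∀ n, T.edge (π n) (π (n + 1))) →
    CPLTL.Sat (T.traceOf π) α 0 φ

/-- The maximal cost occurring in the transition system. -/
noncomputable def maxCost (T : TransSys P κ S) : ℕ :=
  sSup {c | ∃ s s', T.edge s s' ∧ T.cost s s' = c}

end TransSys

/-!
Negating `φ` yields a formula `ψ` without parameterized always operators that holds on the trace
of some path `π` under some valuation, hence also when all bounds are dropped. Label each position
of `π` by its state and by the subformulas of `ψ` that hold there without bounds. Some label recurs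
infinitely often, and jumping between positions with equal labels one builds a lasso, with prefix
`q` and period `p` bounded by `(2|φ| + 2) · |S| · 2^|φ|`, whose loop fulfils every eventuality
pending at its start. The lasso is again a path of the system satisfying `ψ` without bounds, and on
its ultimately periodic trace every `F_{≤z}` is fulfilled within `q + p` steps, i.e. at cost at most
`(q + p) · W`. So the valuation constantly `(q + p) · W` violates `φ`.
-/

theorem exists_until_of_step {A B C : ℕ → Prop} (hstep : ∀ n, A n → B n ∨ (C n ∧ A (n + 1)))
    (hfair : ∀ n, ∃ m ≥ n, A m → ∃ j, B (m + j)) {n : ℕ} (hn : A n) :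
    ∃ j, B (n + j) ∧ ∀ k < j, C (n + k) := by
  by_contra! hnot
  have hpersist : ∀ j, A (n + j) ∧ ∀ k < j, C (n + k) := by
    intro j
    induction j with
    | zero => exact ⟨hn, by simp⟩
    | succ j ih =>
      rcases hstep _ ih.1 with hB | ⟨hC, hA⟩
      · obtain ⟨k, hk, hnC⟩ := hnot j hB
        exact absurd (ih.2 k hk) hnC
      · exact ⟨hA, fun k hk => (Nat.lt_succ_iff_lt_or_eq.1 hk).elim (ih.2 k) (· ▸ hC)⟩
  obtain ⟨m, hm, hfair⟩ := hfair n
  obtain ⟨j, hB⟩ := hfair (by simpa [Nat.add_sub_cancel' hm] using (hpersist (m - n)).1)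
  obtain ⟨k, hk, hnC⟩ := hnot (m - n + j) (by rwa [← Nat.add_assoc, Nat.add_sub_cancel' hm])
  exact hnC ((hpersist _).2 k hk)

theorem release_of_step {A B C : ℕ → Prop} (hstep : ∀ n, A n → B n ∧ (C n ∨ A (n + 1)))
    {n : ℕ} (hn : A n) (j : ℕ) : B (n + j) ∨ ∃ k < j, C (n + k) := by
  induction j generalizing n with
  | zero => exact Or.inl (hstep n hn).1
  | succ j ih =>
    rcases (hstep n hn).2 with hC | hA
    · exact Or.inr ⟨0, j.succ_pos, hC⟩
    · rcases ih hA with hB | ⟨k, hk, hC⟩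
      · exact Or.inl (by rwa [Nat.add_right_comm] at hB)
      · exact Or.inr ⟨k + 1, by omega, by rwa [Nat.add_right_comm] at hC⟩

theorem Trace.cst_le_mul {P : Type} {w : Trace P} {W : ℕ} (hW : ∀ n, w.cost n ≤ W) (n j : ℕ) :
    w.cst n j ≤ j * W := by
  simpa [Trace.cst] using Finset.sum_le_card_nsmul (Finset.range j) _ W fun i _ => hW (n + i)

namespace CPLTL

variable {P Var : Type}

theorem self_mem_cl (φ : CPLTL P Var) : φ ∈ cl φ := by
  cases φ <;> simp [cl]

theorem cl_subset_of_mem {φ χ : CPLTL P Var} (h : χ ∈ cl φ) : cl χ ⊆ cl φ := by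
  induction φ with
  | pos | nneg => simp only [cl, Set.mem_singleton_iff] at h; rw [h]
  | conj _ _ ih₁ ih₂ | disj _ _ ih₁ ih₂ | until_ _ _ ih₁ ih₂ | release _ _ ih₁ ih₂ =>
    simp only [cl, Set.mem_insert_iff, Set.mem_union] at h
    rcases h with rfl | h | h
    · rfl
    · exact (ih₁ h).trans (Set.subset_union_left.trans (Set.subset_insert _ _))
    · exact (ih₂ h).trans (Set.subset_union_right.trans (Set.subset_insert _ _))
  | next _ ih | fleq _ _ ih | gleq _ _ ih =>
    simp only [cl, Set.mem_insert_iff] at h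
    rcases h with rfl | h
    · rfl
    · exact (ih h).trans (Set.subset_insert _ _)

theorem cl_finite (φ : CPLTL P Var) : (cl φ).Finite := by
  induction φ <;> simp [cl, *]

instance (φ : CPLTL P Var) : Finite (cl φ) := (cl_finite φ).to_subtype

theorem size_pos (φ : CPLTL P Var) : 0 < size φ :=
  (Set.ncard_pos (cl_finite φ)).2 ⟨φ, self_mem_cl φ⟩

theorem negate_negate (φ : CPLTL P Var) : negate (negate φ) = φ := by
  induction φ <;> simp [negate, *]

theorem varG_negate (φ : CPLTL P Var) : varG (negate φ) = varF φ := by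
  induction φ <;> simp [negate, varG, varF, *]

theorem IsG.isF_negate {φ : CPLTL P Var} (h : IsG φ) : IsF (negate φ) := by
  rwa [IsF, varG_negate]

theorem size_negate (φ : CPLTL P Var) : size (negate φ) = size φ := by
  have : cl (negate φ) = negate '' cl φ := by
    induction φ <;> simp [negate, cl, Set.image_insert_eq, Set.image_union, *]
  rw [size, this, Set.ncard_image_of_injective _ (Function.Involutive.injective negate_negate),
    size]

theorem sat_negate (w : Trace P) (α : Var → ℕ) (φ : CPLTL P Var) (n : ℕ) :
    Sat w α n (negate φ) ↔ ¬ Sat w α n φ := by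
  induction φ generalizing n <;> simp [negate, Sat, imp_iff_not_or, *]

/-- Satisfaction with every parameterized bound dropped. -/
def SatInf (w : Trace P) : ℕ → CPLTL P Var → Prop
  | n, pos p => p ∈ w.state n
  | n, nneg p => p ∉ w.state n
  | n, conj φ ψ => SatInf w n φ ∧ SatInf w n ψ
  | n, disj φ ψ => SatInf w n φ ∨ SatInf w n ψ
  | n, next φ => SatInf w (n + 1) φ
  | n, until_ φ ψ => ∃ j, SatInf w (n + j) ψ ∧ ∀ k, k < j → SatInf w (n + k) φ
  | n, release φ ψ => ∀ j, SatInf w (n + j) ψ ∨ ∃ k, k < j ∧ SatInf w (n + k) φ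
  | n, fleq _ φ => ∃ j, SatInf w (n + j) φ
  | n, gleq _ φ => ∀ j, SatInf w (n + j) φ

section Unbounded

variable {w : Trace P} {n : ℕ} {φ ψ : CPLTL P Var}

theorem Sat.satInf {α : Var → ℕ} (hF : IsF φ) (h : Sat w α n φ) :
    SatInf w n φ := by
  simp only [IsF] at hF
  induction φ generalizing n with
  | pos | nneg => exact h
  | conj _ _ ih₁ ih₂ =>
    rw [varG, Set.union_empty_iff] at hF
    exact ⟨ih₁ hF.1 h.1, ih₂ hF.2 h.2⟩
  | disj _ _ ih₁ ih₂ =>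
    rw [varG, Set.union_empty_iff] at hF
    exact h.imp (ih₁ hF.1) (ih₂ hF.2)
  | until_ _ _ ih₁ ih₂ =>
    rw [varG, Set.union_empty_iff] at hF
    obtain ⟨j, hj, hk⟩ := h
    exact ⟨j, ih₂ hF.2 hj, fun k hkj => ih₁ hF.1 (hk k hkj)⟩
  | release _ _ ih₁ ih₂ =>
    rw [varG, Set.union_empty_iff] at hF
    exact fun j => (h j).imp (ih₂ hF.2) fun ⟨k, hkj, hk⟩ => ⟨k, hkj, ih₁ hF.1 hk⟩
  | next _ ih => exact ih hF h
  | fleq _ _ ih =>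
    obtain ⟨j, -, hj⟩ := h
    exact ⟨j, ih hF hj⟩
  | gleq => exact absurd hF (Set.insert_nonempty _ _).ne_empty

theorem SatInf.until_step (h : SatInf w n (until_ φ ψ)) :
    SatInf w n ψ ∨ (SatInf w n φ ∧ SatInf w (n + 1) (until_ φ ψ)) := by
  obtain ⟨_ | j, hj, hk⟩ := h
  · exact Or.inl hj
  · refine Or.inr ⟨hk 0 j.succ_pos, j, by rwa [Nat.add_right_comm], fun k hkj => ?_⟩
    rw [Nat.add_right_comm]
    exact hk (k + 1) (by omega)

theorem SatInf.release_step (h : SatInf w n (release φ ψ)) :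
    SatInf w n ψ ∧ (SatInf w n φ ∨ SatInf w (n + 1) (release φ ψ)) := by
  refine ⟨(h 0).resolve_right (by simp), or_iff_not_imp_left.2 fun hφ j => ?_⟩
  rcases h (j + 1) with hψ | ⟨_ | k, hkj, hk⟩
  · exact Or.inl (by rwa [Nat.add_right_comm])
  · exact absurd hk hφ
  · exact Or.inr ⟨k, by omega, by rwa [Nat.add_right_comm]⟩

theorem SatInf.fleq_step {z : Var} (h : SatInf w n (fleq z φ)) :
    SatInf w n φ ∨ SatInf w (n + 1) (fleq z φ) := by
  obtain ⟨_ | j, hj⟩ := h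
  · exact Or.inl hj
  · exact Or.inr ⟨j, by rwa [Nat.add_right_comm]⟩

theorem SatInf.gleq_step {z : Var} (h : SatInf w n (gleq z φ)) :
    SatInf w n φ ∧ SatInf w (n + 1) (gleq z φ) :=
  ⟨h 0, fun j => by rw [Nat.add_right_comm]; exact h (j + 1)⟩

/-- What an eventuality waits for; every other formula is its own goal. -/
def goal : CPLTL P Var → CPLTL P Var
  | until_ _ φ => φ
  | fleq _ φ => φ
  | φ => φ

theorem goal_mem_cl (h : φ ∈ cl ψ) : goal φ ∈ cl ψ := by
  refine cl_subset_of_mem h ?_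
  cases φ <;> simp [goal, cl, self_mem_cl]

theorem SatInf.exists_goal (h : SatInf w n φ) : ∃ j, SatInf w (n + j) (goal φ) := by
  cases φ with
  | until_ => obtain ⟨j, hj, -⟩ := h; exact ⟨j, hj⟩
  | fleq => exact h
  | _ => exact ⟨0, h⟩

theorem satInf_congr {m m' : ℕ} (h : ∀ i, w.state (m + i) = w.state (m' + i)) (φ : CPLTL P Var)
    (n : ℕ) : SatInf w (m + n) φ ↔ SatInf w (m' + n) φ := by
  induction φ generalizing n <;> simp only [SatInf, Nat.add_assoc, *]

end Unbounded

theorem satInf_of_reindex {w w' : Trace P} {σ : ℕ → ℕ} {ψ : CPLTL P Var}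
    (hstate : ∀ n, w'.state n = w.state (σ n))
    (hnext : ∀ n, ∀ χ ∈ cl ψ, SatInf w (σ n + 1) χ → SatInf w (σ (n + 1)) χ)
    (hfair : ∀ χ ∈ cl ψ, ∀ n, ∃ m ≥ n, SatInf w (σ m) χ → ∃ j, SatInf w (σ (m + j)) (goal χ))
    {χ : CPLTL P Var} (hχ : χ ∈ cl ψ) {n : ℕ} (h : SatInf w (σ n) χ) : SatInf w' n χ := by
  induction χ generalizing n with
  | pos | nneg => simpa only [SatInf, hstate] using h
  | conj φ₁ φ₂ ih₁ ih₂ =>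
    exact ⟨ih₁ (cl_subset_of_mem hχ (by simp [cl, self_mem_cl])) h.1,
      ih₂ (cl_subset_of_mem hχ (by simp [cl, self_mem_cl])) h.2⟩
  | disj φ₁ φ₂ ih₁ ih₂ =>
    exact h.imp (ih₁ (cl_subset_of_mem hχ (by simp [cl, self_mem_cl])))
      (ih₂ (cl_subset_of_mem hχ (by simp [cl, self_mem_cl])))
  | next φ ih =>
    have hφ : φ ∈ cl ψ := cl_subset_of_mem hχ (by simp [cl, self_mem_cl])
    exact ih hφ (hnext n φ hφ h)
  | until_ φ₁ φ₂ ih₁ ih₂ =>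
    obtain ⟨j, hj, hk⟩ := exists_until_of_step (A := fun m => SatInf w (σ m) (until_ φ₁ φ₂))
      (fun m hm => hm.until_step.imp_right (And.imp_right (hnext m _ hχ))) (hfair _ hχ) h
    exact ⟨j, ih₂ (cl_subset_of_mem hχ (by simp [cl, self_mem_cl])) hj,
      fun k hkj => ih₁ (cl_subset_of_mem hχ (by simp [cl, self_mem_cl])) (hk k hkj)⟩
  | release φ₁ φ₂ ih₁ ih₂ =>
    refine fun j => (release_of_step (A := fun m => SatInf w (σ m) (release φ₁ φ₂))
      (fun m hm => hm.release_step.imp_right (Or.imp_right (hnext m _ hχ))) h j).imp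
        (ih₂ (cl_subset_of_mem hχ (by simp [cl, self_mem_cl]))) ?_
    exact fun ⟨k, hkj, hk⟩ => ⟨k, hkj, ih₁ (cl_subset_of_mem hχ (by simp [cl, self_mem_cl])) hk⟩
  | fleq z φ ih =>
    obtain ⟨j, hj, -⟩ := exists_until_of_step (A := fun m => SatInf w (σ m) (fleq z φ))
      (C := fun _ => True)
      (fun m hm => hm.fleq_step.imp_right (⟨trivial, hnext m _ hχ ·⟩)) (hfair _ hχ) h
    exact ⟨j, ih (cl_subset_of_mem hχ (by simp [cl, self_mem_cl])) hj⟩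
  | gleq z φ ih =>
    refine fun j => ih (cl_subset_of_mem hχ (by simp [cl, self_mem_cl])) ?_
    exact (release_of_step (A := fun m => SatInf w (σ m) (gleq z φ)) (C := fun _ => False)
      (fun m hm => hm.gleq_step.imp_right (Or.inr <| hnext m _ hχ ·)) h j).resolve_right
      (by simp)

section Periodic

variable {w : Trace P} {q p : ℕ}

theorem satInf_add_period (hper : Function.Periodic (fun k => w.state (q + k)) p) {m : ℕ}
    (hm : q ≤ m) (φ : CPLTL P Var) : SatInf w (m + p) φ ↔ SatInf w m φ := by
  refine satInf_congr (fun i => ?_) φ 0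
  have := hper (m - q + i)
  simp only at this
  rwa [← Nat.add_assoc, ← Nat.add_assoc, Nat.add_sub_cancel' hm, Nat.add_right_comm] at this

theorem SatInf.exists_lt_of_periodic (hp : 0 < p)
    (hper : Function.Periodic (fun k => w.state (q + k)) p) {φ : CPLTL P Var} {n j : ℕ}
    (h : SatInf w (n + j) φ) : ∃ j' < q + p, SatInf w (n + j') φ := by
  induction j using Nat.strong_induction_on with
  | _ j ih =>
    by_cases hj : j < q + p
    · exact ⟨j, hj, h⟩
    · refine ih (j - p) (by omega) ((satInf_add_period hper (by omega) φ).1 ?_)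
      rwa [Nat.add_assoc, Nat.sub_add_cancel (by omega)]

theorem sat_of_satInf_of_periodic (hp : 0 < p)
    (hper : Function.Periodic (fun k => w.state (q + k)) p) {W : ℕ} (hW : ∀ n, w.cost n ≤ W)
    {α : Var → ℕ} (hα : ∀ z, (q + p) * W ≤ α z) {φ : CPLTL P Var} {n : ℕ}
    (h : SatInf w n φ) : Sat w α n φ := by
  induction φ generalizing n with
  | pos | nneg => exact h
  | conj _ _ ih₁ ih₂ => exact ⟨ih₁ h.1, ih₂ h.2⟩
  | disj _ _ ih₁ ih₂ => exact h.imp ih₁ ih₂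
  | next _ ih => exact ih h
  | until_ _ _ ih₁ ih₂ =>
    obtain ⟨j, hj, hk⟩ := h
    exact ⟨j, ih₂ hj, fun k hkj => ih₁ (hk k hkj)⟩
  | release _ _ ih₁ ih₂ => exact fun j => (h j).imp ih₂ fun ⟨k, hkj, hk⟩ => ⟨k, hkj, ih₁ hk⟩
  | fleq z _ ih =>
    obtain ⟨j, hj⟩ := h
    obtain ⟨j', hj', h'⟩ := hj.exists_lt_of_periodic hp hper
    refine ⟨j', ?_, ih h'⟩
    calc w.cst n j' ≤ j' * W := Trace.cst_le_mul hW n j'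
      _ ≤ (q + p) * W := Nat.mul_le_mul_right W hj'.le
      _ ≤ α z := hα z
  | gleq _ _ ih => exact fun j _ => ih (h j)

end Periodic

end CPLTL

section JumpChain

variable {α : Type*}

/-- Along a jump chain, `g ∘ d` only takes steps `g m ↦ g (m + 1)` that occur in `g`. -/
def IsJumpChain (g : ℕ → α) (d : ℕ → ℕ) (l : ℕ) : Prop := ∀ i < l, g (d (i + 1)) = g (d i + 1)

def splice (d₁ : ℕ → ℕ) (l : ℕ) (d₂ : ℕ → ℕ) (i : ℕ) : ℕ := if i ≤ l then d₁ i else d₂ (i - l)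

variable {g : ℕ → α} {d d₁ d₂ : ℕ → ℕ} {l l₁ l₂ p : ℕ}

theorem splice_of_le {i : ℕ} (h : i ≤ l) : splice d₁ l d₂ i = d₁ i := if_pos h

theorem splice_add (h : d₂ 0 = d₁ l) (i : ℕ) : splice d₁ l d₂ (l + i) = d₂ i := by
  unfold splice
  split_ifs with hi
  · obtain rfl : i = 0 := by omega
    exact h.symm
  · rw [Nat.add_sub_cancel_left]

theorem isJumpChain_add (a l : ℕ) : IsJumpChain g (a + ·) l := fun _ _ => rfl

theorem IsJumpChain.splice (h₁ : IsJumpChain g d₁ l₁) (h₂ : IsJumpChain g d₂ l₂)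
    (h : d₂ 0 = d₁ l₁) : IsJumpChain g (splice d₁ l₁ d₂) (l₁ + l₂) := by
  intro i hi
  rcases lt_or_ge i l₁ with hi₁ | hi₁
  · rw [splice_of_le hi₁, splice_of_le hi₁.le]
    exact h₁ i hi₁
  · obtain ⟨k, rfl⟩ := Nat.exists_eq_add_of_le hi₁
    rw [Nat.add_assoc, splice_add h, splice_add h]
    exact h₂ k (by omega)

/-- Cutting out the part of a jump chain between two positions with equal `g`-values. -/
theorem IsJumpChain.shortcut (hd : IsJumpChain g d l) {i j : ℕ} (hij : i < j)
    (hjl : j ≤ l) (hg : g (d i) = g (d j)) :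
    IsJumpChain g (fun k => d (if k < i then k else k + (j - i))) (l - (j - i)) := by
  intro k hk
  rcases lt_trichotomy (k + 1) i with h | h | h
  · simp only [if_pos h, if_pos (show k < i by omega)]
    exact hd k (by omega)
  · simp only [if_neg (show ¬ k + 1 < i by omega), if_pos (show k < i by omega)]
    rw [show k + 1 + (j - i) = j by omega, ← hg, ← h]
    exact hd k (by omega)
  · simp only [if_neg (show ¬ k + 1 < i by omega), if_neg (show ¬ k < i by omega)]
    rw [Nat.add_right_comm]
    exact hd _ (by omega)

variable (g) in
theorem exists_short_jumpChain [Finite α] {a e : ℕ} (hae : a ≤ e) :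
    ∃ l d, d 0 = a ∧ d l = e ∧ IsJumpChain g d l ∧ l ≤ Nat.card α := by
  classical
  have hex : ∃ l d, d 0 = a ∧ d l = e ∧ IsJumpChain g d l :=
    ⟨e - a, (a + ·), rfl, Nat.add_sub_cancel' hae, isJumpChain_add a _⟩
  obtain ⟨d, hd0, hdl, hd⟩ := Nat.find_spec hex
  refine ⟨_, d, hd0, hdl, hd, ?_⟩
  have hinj : Function.Injective fun i : Fin (Nat.find hex) => g (d (i + 1)) := by
    intro i j hij
    by_contra hne
    wlog hlt : i < j generalizing i j
    · exact this hij.symm (Ne.symm hne) (lt_of_le_of_ne (not_lt.1 hlt) (Ne.symm hne))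
    refine Nat.find_min hex (m := Nat.find hex - (j + 1 - (i + 1))) (by omega)
      ⟨_, ?_, ?_, hd.shortcut (i := i + 1) (j := j + 1) (by omega) j.2 hij⟩
    · simpa using hd0
    · rwa [if_neg (by omega), Nat.sub_add_cancel (by omega)]
  simpa using Nat.card_le_card_of_injective _ hinj

theorem IsJumpChain.mod (hd : IsJumpChain g d p) (hp : 0 < p) (hg : g (d p) = g (d 0))
    (n : ℕ) : IsJumpChain g (fun k => d (k % p)) n := by
  intro k _
  have hk : (k + 1) % p = (k % p + 1) % p := by
    conv_lhs => rw [← Nat.mod_add_div k p, Nat.add_right_comm, Nat.add_mul_mod_self_left]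
  have hlt := Nat.mod_lt k hp
  simp only [hk]
  rcases Nat.lt_or_ge (k % p + 1) p with h | h
  · rw [Nat.mod_eq_of_lt h]
    exact hd _ hlt
  · have := hd _ hlt
    rw [show k % p + 1 = p by omega] at this ⊢
    rwa [Nat.mod_self, ← hg]

theorem exists_fulfilling_jumpChain [Finite α] {ι : Type*} {A B : ι → α → Prop}
    (hfair : ∀ i m, A i (g m) → ∃ j, B i (g (m + j))) {v : α} (hv : {m | g m = v}.Infinite)
    (s : Finset ι) {a : ℕ} (ha : g a = v) :
    ∃ l d, d 0 = a ∧ a < d l ∧ g (d l) = v ∧ IsJumpChain g d l ∧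
      (∀ i ∈ s, A i v → ∃ k < l, B i (g (d k))) ∧ l ≤ (2 * s.card + 1) * Nat.card α := by
  classical
  induction s using Finset.induction_on generalizing a with
  | empty =>
    obtain ⟨b, hb, hab⟩ := hv.exists_gt a
    obtain ⟨l, d, hd0, hdl, hd, hl⟩ := exists_short_jumpChain g hab.le
    exact ⟨l, d, hd0, hdl ▸ hab, hdl ▸ hb, hd, by simp, by simpa using hl⟩
  | insert x s hx ih =>
    obtain ⟨f, haf, hf⟩ : ∃ f ≥ a, A x v → B x (g f) := by
      by_cases hA : A x v
      · obtain ⟨j, hj⟩ := hfair x a (ha ▸ hA)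
        exact ⟨a + j, by omega, fun _ => hj⟩
      · exact ⟨a, le_rfl, hA.elim⟩
    obtain ⟨b, hb, hfb⟩ := hv.exists_gt f
    obtain ⟨l₁, d₁, hd₁0, hd₁l, hd₁, hl₁⟩ := exists_short_jumpChain g haf
    obtain ⟨l₂, d₂, hd₂0, hd₂l, hd₂, hl₂⟩ := exists_short_jumpChain g hfb.le
    obtain ⟨l₃, d₃, hd₃0, hbd₃, hd₃v, hd₃, hd₃B, hl₃⟩ := ih hb
    have hl₂ : 0 < l₂ := Nat.pos_of_ne_zero fun h => by subst h; omega
    have h₁₂ : d₂ 0 = d₁ l₁ := hd₂0.trans hd₁l.symm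
    have h₁₂₃ : d₃ 0 = splice d₁ l₁ d₂ (l₁ + l₂) := by rw [splice_add h₁₂, hd₂l, hd₃0]
    refine ⟨l₁ + l₂ + l₃, splice (splice d₁ l₁ d₂) (l₁ + l₂) d₃, ?_, ?_, ?_,
      (hd₁.splice hd₂ h₁₂).splice hd₃ h₁₂₃, ?_, ?_⟩
    · rw [splice_of_le (by omega), splice_of_le (by omega), hd₁0]
    · rw [splice_add h₁₂₃]
      omega
    · rwa [splice_add h₁₂₃]
    · intro i hi hA
      rcases Finset.mem_insert.1 hi with rfl | hi
      · refine ⟨l₁, by omega, ?_⟩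
        rw [splice_of_le (by omega), splice_of_le le_rfl, hd₁l]
        exact hf hA
      · obtain ⟨k, hk, hB⟩ := hd₃B i hi hA
        exact ⟨l₁ + l₂ + k, by omega, by rwa [splice_add h₁₂₃]⟩
    · rw [Finset.card_insert_of_notMem hx]
      nlinarith

variable (g) in
theorem exists_lasso [Finite α] {ι : Type*} {A B : ι → α → Prop}
    (hfair : ∀ i m, A i (g m) → ∃ j, B i (g (m + j))) (s : Finset ι) :
    ∃ (σ : ℕ → ℕ) (q p : ℕ), σ 0 = 0 ∧ 0 < p ∧ (∀ n, g (σ (n + 1)) = g (σ n + 1)) ∧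
      Function.Periodic (fun k => σ (q + k)) p ∧
      (∀ i ∈ s, A i (g (σ q)) → ∃ k, B i (g (σ (q + k)))) ∧
      q + p ≤ (2 * s.card + 2) * Nat.card α := by
  obtain ⟨v, hv⟩ := Finite.exists_infinite_fiber g
  replace hv : {m | g m = v}.Infinite := Set.infinite_coe_iff.1 hv
  obtain ⟨a, ha⟩ := hv.nonempty
  obtain ⟨q, d₁, hd₁0, hd₁q, hd₁, hq⟩ := exists_short_jumpChain g (Nat.zero_le a)
  obtain ⟨p, d₂, hd₂0, hap, hd₂p, hd₂, hd₂B, hp⟩ := exists_fulfilling_jumpChain hfair hv s ha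
  have hp0 : 0 < p := Nat.pos_of_ne_zero fun h => by subst h; omega
  obtain ⟨c, hc⟩ : ∃ c : ℕ → ℕ, ∀ k, c k = d₂ (k % p) := ⟨_, fun _ => rfl⟩
  have hcyc : ∀ n, IsJumpChain g c n := by
    simpa only [IsJumpChain, hc] using hd₂.mod hp0 (hd₂p.trans (hd₂0 ▸ ha).symm)
  have hjoin : c 0 = d₁ q := by rw [hc, Nat.zero_mod, hd₂0, hd₁q]
  refine ⟨splice d₁ q c, q, p, ?_, hp0, fun n => ?_, fun k => ?_, ?_, ?_⟩
  · rw [splice_of_le (Nat.zero_le _), hd₁0]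
  · exact hd₁.splice (hcyc (n + 1)) hjoin n (by omega)
  · simp only [splice_add hjoin, hc, Nat.add_mod_right]
  · intro i hi hA
    rw [splice_of_le le_rfl, hd₁q, ha] at hA
    obtain ⟨k, hk, hB⟩ := hd₂B i hi hA
    exact ⟨k, by rwa [splice_add hjoin, hc, Nat.mod_eq_of_lt hk]⟩
  · nlinarith

end JumpChain

namespace TransSys

open CPLTL

variable {P S Var : Type} {κ : P}

theorem cost_le_maxCost [Finite S] (T : TransSys P κ S) {s s' : S} (h : T.edge s s') :
    T.cost s s' ≤ T.maxCost := by
  refine le_csSup (Set.Finite.bddAbove ?_) ⟨s, s', h, rfl⟩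
  refine (Set.finite_range fun e : S × S => T.cost e.1 e.2).subset ?_
  rintro _ ⟨a, b, -, rfl⟩
  exact ⟨(a, b), rfl⟩

theorem exists_lasso_of_satInf [Finite S] (T : TransSys P κ S) {π : ℕ → S}
    (hπ : ∀ n, T.edge (π n) (π (n + 1))) {ψ : CPLTL P Var} (h : SatInf (T.traceOf π) 0 ψ) :
    ∃ (π' : ℕ → S) (q p : ℕ), π' 0 = π 0 ∧ (∀ n, T.edge (π' n) (π' (n + 1))) ∧ 0 < p ∧
      Function.Periodic (fun k => π' (q + k)) p ∧ SatInf (T.traceOf π') 0 ψ ∧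
      q + p ≤ (2 * size ψ + 2) * (Nat.card S * 2 ^ size ψ) := by
  have := Fintype.ofFinite (cl ψ)
  set w := T.traceOf π
  obtain ⟨σ, q, p, hσ0, hp, hσ, hper, hloop, hqp⟩ := exists_lasso
    (fun m => (π m, fun χ : cl ψ => SatInf w m χ.1)) (A := fun χ x => x.2 χ)
    (B := fun χ x => x.2 ⟨goal χ, goal_mem_cl χ.2⟩) (fun _ _ hm => hm.exists_goal) Finset.univ
  have hnext (n : ℕ) (χ : CPLTL P Var) (hχ : χ ∈ cl ψ) :
      SatInf w (σ (n + 1)) χ = SatInf w (σ n + 1) χ :=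
    congrFun (congrArg Prod.snd (hσ n)) ⟨χ, hχ⟩
  have hfair (χ) (hχ : χ ∈ cl ψ) (n : ℕ) :
      ∃ m ≥ n, SatInf w (σ m) χ → ∃ j, SatInf w (σ (m + j)) (goal χ) := by
    have hshift (k : ℕ) : σ (q + n * p + k) = σ (q + k) := by
      have := (hper.nat_mul n) k
      rwa [Nat.cast_id, Nat.add_comm k, ← Nat.add_assoc] at this
    refine ⟨q + n * p, by nlinarith, fun hA => ?_⟩
    obtain ⟨k, hk⟩ := hloop ⟨χ, hχ⟩ (Finset.mem_univ _) (hshift 0 ▸ hA)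
    exact ⟨k, hshift k ▸ hk⟩
  have hπσ (n : ℕ) : π (σ (n + 1)) = π (σ n + 1) := congrArg Prod.fst (hσ n)
  refine ⟨π ∘ σ, q, p, by simp [hσ0], fun n => ?_, hp, fun k => congrArg π (hper k), ?_, ?_⟩
  · simpa only [Function.comp_apply, hπσ] using hπ (σ n)
  · exact satInf_of_reindex (w := w) (σ := σ) (fun _ => rfl) (fun n χ hχ => (hnext n χ hχ).mpr)
      hfair (self_mem_cl ψ) (by rwa [hσ0])
  · simpa [Nat.card_prod, Nat.card_fun, Nat.card_coe_set_eq, size] using hqp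

end TransSys

theorem two_mul_add_two_mul_two_pow_le {s : ℕ} (hs : 0 < s) :
    (2 * s + 2) * 2 ^ s ≤ 2 ^ (3 * s) := by
  have : 2 * s + 2 ≤ 2 ^ (2 * s) :=
    calc 2 * s + 2 = 2 * (s + 1) := by ring
      _ ≤ 2 * 2 ^ s := Nat.mul_le_mul_left 2 Nat.lt_two_pow_self
      _ = 2 ^ (s + 1) := by ring
      _ ≤ 2 ^ (2 * s) := Nat.pow_le_pow_right two_pos (by omega)
  calc (2 * s + 2) * 2 ^ s ≤ 2 ^ (2 * s) * 2 ^ s := Nat.mul_le_mul_right _ this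
    _ = 2 ^ (3 * s) := by ring

/-- there is a constant `c` such that whenever a transition system
`T` does not satisfy a cPLTL_G formula `φ` with respect to every variable valuation,
there is a violating valuation bounded by `2^{c·|φ|} · |S| · W`, where `|S|` is the
number of states of `T` and `W` is its maximal cost. -/
theorem mc_always_violating_valuation_upper_bound :
    ∃ c : ℕ, ∀ (P S Var : Type) [Fintype S] [Infinite Var] (κ : P)
      (T : TransSys P κ S) (φ : CPLTL P Var), CPLTL.IsG φ →
      (¬ ∀ α, T.Satisfies φ α) →
      ∃ α, ¬ T.Satisfies φ α ∧
        ∀ z, α z ≤ 2 ^ (c * CPLTL.size φ) * Fintype.card S * T.maxCost := by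
  refine ⟨3, fun P S Var _ _ κ T φ hG hviol => ?_⟩
  obtain ⟨α, π, hπ0, hπ, hα⟩ : ∃ α π, π 0 = T.init ∧ (∀ n, T.edge (π n) (π (n + 1))) ∧
      ¬ CPLTL.Sat (T.traceOf π) α 0 φ := by
    simpa [TransSys.Satisfies] using hviol
  have hψ := ((CPLTL.sat_negate _ _ φ 0).2 hα).satInf hG.isF_negate
  obtain ⟨π', q, p, hπ'0, hπ', hp, hper, hψ', hqp⟩ := T.exists_lasso_of_satInf hπ hψ
  refine ⟨fun _ => (q + p) * T.maxCost, fun hsat => ?_, fun _ => ?_⟩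
  · refine (CPLTL.sat_negate _ _ φ 0).1 ?_ (hsat π' (hπ'0.trans hπ0) hπ')
    exact CPLTL.sat_of_satInf_of_periodic hp (fun k => congrArg T.label (hper k))
      (fun n => T.cost_le_maxCost (hπ' n)) (fun _ => le_rfl) hψ'
  · rw [CPLTL.size_negate, Nat.card_eq_fintype_card] at hqp
    calc (q + p) * T.maxCost
        ≤ (2 * CPLTL.size φ + 2) * 2 ^ CPLTL.size φ * Fintype.card S * T.maxCost := by
          gcongr
          linarith
      _ ≤ 2 ^ (3 * CPLTL.size φ) * Fintype.card S * T.maxCost := by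
          gcongr
          exact two_mul_add_two_mul_two_pow_le (CPLTL.size_pos φ)
end

section
/- The parameterized until operator is expressible via the parameterized eventually: for all cPLTL formulas φ and ψ, all cost-traces w, all positions n, and all variable valuations α, (w,n,α) ⊨ φ U_{≤x} ψ if and only if (w,n,α) ⊨ (φ U ψ) ∧ F_{≤x} ψ. -/
/-- Semantics of the parameterized until `φ U_{≤z} ψ`. -/
def SatUntilLe {P Var : Type} (w : Trace P) (α : Var → ℕ) (n : ℕ) (z : Var)
    (φ ψ : CPLTL P Var) : Prop :=
  ∃ j, w.cst n j ≤ α z ∧ CPLTL.Sat w α (n + j) ψ ∧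
    ∀ k, k < j → CPLTL.Sat w α (n + k) φ

/-- Semantics of the parameterized release `φ R_{≤z} ψ`. -/
def SatReleaseLe {P Var : Type} (w : Trace P) (α : Var → ℕ) (n : ℕ) (z : Var)
    (φ ψ : CPLTL P Var) : Prop :=
  ∀ j, w.cst n j ≤ α z →
    (CPLTL.Sat w α (n + j) ψ ∨ ∃ k, k < j ∧ CPLTL.Sat w α (n + k) φ)

/-- Semantics of the cost-exceeding eventually `F_{>z} φ`. -/
def SatFGt {P Var : Type} (w : Trace P) (α : Var → ℕ) (n : ℕ) (z : Var)
    (φ : CPLTL P Var) : Prop :=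
  ∃ j, α z < w.cst n j ∧ CPLTL.Sat w α (n + j) φ

/-- Semantics of the cost-exceeding always `G_{>z} φ`. -/
def SatGGt {P Var : Type} (w : Trace P) (α : Var → ℕ) (n : ℕ) (z : Var)
    (φ : CPLTL P Var) : Prop :=
  ∀ j, α z < w.cst n j → CPLTL.Sat w α (n + j) φ

/-- `tt`, defined as `κ ∨ ¬κ` for the fixed proposition `κ`. -/
def ttF {P Var : Type} (κ : P) : CPLTL P Var := .disj (.pos κ) (.nneg κ)

/-- `ff`, defined as `κ ∧ ¬κ` for the fixed proposition `κ`. -/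
def ffF {P Var : Type} (κ : P) : CPLTL P Var := .conj (.pos κ) (.nneg κ)

/-- The derived eventually operator `F φ = tt U φ`. -/
def evF {P Var : Type} (κ : P) (φ : CPLTL P Var) : CPLTL P Var := .until_ (ttF κ) φ

/-- The derived always operator `G φ = ff R φ`. -/
def alG {P Var : Type} (κ : P) (φ : CPLTL P Var) : CPLTL P Var := .release (ffF κ) φ

/-- `φ U_{≤x} ψ ≡ (φ U ψ) ∧ F_{≤x} ψ`. -/
theorem until_le_expressible {P Var : Type} [Infinite Var] (κ : P)
    (φ ψ : CPLTL P Var) (w : Trace P) (hw : w.Valid κ) (n : ℕ)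
    (α : Var → ℕ) (x : Var) :
    SatUntilLe w α n x φ ψ ↔
      CPLTL.Sat w α n (.conj (.until_ φ ψ) (.fleq x ψ)) := by
  constructor
  · rintro ⟨j, hc, hψ, hφ⟩
    exact ⟨⟨j, hψ, hφ⟩, ⟨j, hc, hψ⟩⟩
  · rintro ⟨⟨j, hψ, hφ⟩, ⟨j', hc, hψ'⟩⟩
    refine ⟨min j j', le_trans ?_ hc, ?_, fun k hk => hφ k (lt_of_lt_of_le hk (min_le_left _ _))⟩
    · exact Finset.sum_le_sum_of_subset (Finset.range_subset_range.mpr (min_le_right _ _))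
    · rcases le_total j j' with h | h
      · simpa [min_eq_left h] using hψ
      · simpa [min_eq_right h] using hψ'
end

section
/- The parameterized release operator is expressible via the parameterized always: for all cPLTL formulas φ and ψ, all cost-traces w, all positions n, and all variable valuations α, (w,n,α) ⊨ φ R_{≤y} ψ if and only if (w,n,α) ⊨ (φ R ψ) ∨ G_{≤y} ψ. -/
/-- `φ R_{≤y} ψ ≡ (φ R ψ) ∨ G_{≤y} ψ`. -/
theorem release_le_expressible {P Var : Type} [Infinite Var] (κ : P)
    (φ ψ : CPLTL P Var) (w : Trace P) (hw : w.Valid κ) (n : ℕ)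
    (α : Var → ℕ) (y : Var) :
    SatReleaseLe w α n y φ ψ ↔
      CPLTL.Sat w α n (.disj (.release φ ψ) (.gleq y ψ)) := by
  constructor
  · intro h
    by_cases hg : ∀ j, w.cst n j ≤ α y → CPLTL.Sat w α (n + j) ψ
    · exact Or.inr hg
    · push_neg at hg
      obtain ⟨j₀, hc₀, hψ₀⟩ := hg
      obtain ⟨k, hk, hφ⟩ := (h j₀ hc₀).resolve_left hψ₀
      refine Or.inl (fun j => ?_)
      rcases lt_or_ge k j with hkj | hjk
      · exact Or.inr ⟨k, hkj, hφ⟩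
      · have hcj : w.cst n j ≤ α y := by
          refine le_trans ?_ hc₀
          exact Finset.sum_le_sum_of_subset
            (Finset.range_subset_range.mpr (hjk.trans_lt hk).le)
        exact h j hcj
  · rintro (h | h)
    · intro j _
      exact h j
    · intro j hj
      exact Or.inl (h j hj)
end

section
/- The cost-exceeding eventually operator is expressible via the parameterized always: for every cPLTL formula φ, every cost-trace w, every position n, and every variable valuation α, (w,n,α) ⊨ F_{>y} φ if and only if (w,n,α) ⊨ G_{≤y} F X (κ ∧ F φ). -/
lemma cst_mono_s17 {P : Type} (w : Trace P) (n : ℕ) : Monotone (w.cst n) := by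
  intro a b hab
  exact Finset.sum_le_sum_of_subset (Finset.range_subset_range.mpr hab)

lemma sat_ttF {P Var : Type} (κ : P) (w : Trace P) (α : Var → ℕ) (m : ℕ) :
    CPLTL.Sat w α m (ttF κ : CPLTL P Var) := by
  simp only [ttF, CPLTL.Sat]
  exact em _

lemma cst_succ {P : Type} (w : Trace P) (n j : ℕ) :
    w.cst n (j + 1) = w.cst n j + w.cost (n + j) := by
  simp [Trace.cst, Finset.sum_range_succ]

/-- `F_{>y} φ ≡ G_{≤y} F X (κ ∧ F φ)`. -/
theorem f_gt_expressible {P Var : Type} [Infinite Var] (κ : P)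
    (φ : CPLTL P Var) (w : Trace P) (hw : w.Valid κ) (n : ℕ)
    (α : Var → ℕ) (y : Var) :
    SatFGt w α n y φ ↔
      CPLTL.Sat w α n (.gleq y (evF κ (.next (.conj (.pos κ) (evF κ φ))))) := by
  constructor
  · rintro ⟨j, hj, hφ⟩ j' hj'
    -- find p with j' ≤ p < j, cost (n+p) > 0
    have hlt : w.cst n j' < w.cst n j := lt_of_le_of_lt hj' hj
    have hpex : ∃ p, j' ≤ p ∧ p < j ∧ 0 < w.cost (n + p) := by
      by_contra hcon
      push_neg at hcon
      have heq : w.cst n j = w.cst n j' := by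
        have hsub : Finset.range j' ⊆ Finset.range j :=
          Finset.range_subset_range.mpr (le_of_lt (by
            by_contra hnot
            push_neg at hnot
            exact absurd (cst_mono_s17 w n hnot) (not_le_of_gt hlt)))
        refine (Finset.sum_subset hsub ?_).symm
        intro x hx hx'
        simp only [Finset.mem_range] at hx hx'
        have := hcon x (le_of_not_gt hx') hx
        omega
      omega
    obtain ⟨p, hpj', hpj, hpcost⟩ := hpex
    refine ⟨p - j', ?_, fun k hk => sat_ttF κ w α _⟩
    show CPLTL.Sat w α (n + j' + (p - j') + 1) _
    have hpos : n + j' + (p - j') + 1 = n + p + 1 := by omega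
    rw [hpos]
    refine ⟨(hw (n + p)).mp hpcost, ⟨j - (p + 1), ?_, fun k hk => sat_ttF κ w α _⟩⟩
    have : n + p + 1 + (j - (p + 1)) = n + j := by omega
    rw [this]; exact hφ
  · intro h
    -- main claim: cst is eventually > α y
    have hex : ∃ j, α y < w.cst n j := by
      by_contra hcon
      push_neg at hcon
      have key : ∀ m, ∃ j, m ≤ w.cst n j := by
        intro m
        induction m with
        | zero => exact ⟨0, Nat.zero_le _⟩
        | succ m ih =>
          obtain ⟨j, hj⟩ := ih
          obtain ⟨k, hk, -⟩ := h j (hcon j)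
          obtain ⟨hκ, -⟩ := hk
          have hc : 0 < w.cost (n + j + k) := (hw (n + j + k)).mpr (by
            have : n + j + k + 1 = n + j + (k + 1) := by omega
            rw [this]; exact hκ)
          refine ⟨j + k + 1, ?_⟩
          have h1 : w.cst n j ≤ w.cst n (j + k) := cst_mono_s17 w n (by omega)
          have h2 := cst_succ w n (j + k)
          have : n + (j + k) = n + j + k := by omega
          rw [this] at h2
          omega
      obtain ⟨j, hj⟩ := key (α y + 1)
      exact absurd (hcon j) (by omega)
    -- let J be the least j with cst > α y
    classical
    let J := Nat.find hex
    have hJ : α y < w.cst n J := Nat.find_spec hex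
    have hJ0 : J ≠ 0 := by
      intro h0
      have : w.cst n J = 0 := by rw [h0]; simp [Trace.cst]
      omega
    have hJ1 : w.cst n (J - 1) ≤ α y := by
      have := Nat.find_min hex (m := J - 1) (by omega)
      omega
    obtain ⟨k, hk, -⟩ := h (J - 1) hJ1
    obtain ⟨-, m, hm, -⟩ := hk
    refine ⟨J - 1 + k + 1 + m, ?_, ?_⟩
    · have : J ≤ J - 1 + k + 1 + m := by omega
      exact lt_of_lt_of_le hJ (cst_mono_s17 w n this)
    · have : n + (J - 1 + k + 1 + m) = n + (J - 1) + k + 1 + m := by omega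
      rw [this]; exact hm
end

section
/- The cost-exceeding always operator is expressible via the parameterized eventually: for every cPLTL formula φ, every cost-trace w, every position n, and every variable valuation α, (w,n,α) ⊨ G_{>x} φ if and only if (w,n,α) ⊨ F_{≤x} G X (¬κ ∨ G φ). -/
/-
From any position the accumulated cost `j ↦ cst n j` is monotone, and by validity it increases
exactly at the steps entering a `κ`-position. Take `j` with `cst n j` the largest value of the
accumulated cost that is at most `α x`. Then `F_{≤x}` can move to `j`, and every `κ`-position
after `j` lies beyond the budget, so `G X (¬κ ∨ G φ)` there says the same as `G_{>x} φ`.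
Conversely, any position beyond the budget is preceded, after the witness of `F_{≤x}`, by a step
of positive cost, i.e. by a `κ`-position, from which `G φ` holds.
-/

theorem Nat.forall_add_iff_forall_le {p : ℕ → Prop} {j : ℕ} :
    (∀ k, p (j + k)) ↔ ∀ i, j ≤ i → p i :=
  ⟨fun h i hi => Nat.add_sub_cancel' hi ▸ h (i - j), fun h k => h _ (Nat.le_add_right j k)⟩

namespace Trace

variable {P : Type} (w : Trace P) (n : ℕ)

theorem cst_mono {j m : ℕ} (h : j ≤ m) : w.cst n j ≤ w.cst n m :=
  Finset.sum_le_sum_of_subset (Finset.range_mono h)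

theorem cst_succ (j : ℕ) : w.cst n (j + 1) = w.cst n j + w.cost (n + j) :=
  Finset.sum_range_succ _ _

theorem exists_pos_cost_of_cst_lt {j m : ℕ} (h : w.cst n j < w.cst n m) :
    ∃ i, j ≤ i ∧ i < m ∧ 0 < w.cost (n + i) := by
  have hjm : j ≤ m := by
    by_contra! hmj
    exact (w.cst_mono n hmj.le).not_gt h
  rw [Trace.cst, Trace.cst, ← Finset.sum_range_add_sum_Ico _ hjm, lt_add_iff_pos_right] at h
  obtain ⟨i, hi, hpos⟩ := Finset.exists_ne_zero_of_sum_ne_zero h.ne'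
  rw [Finset.mem_Ico] at hi
  exact ⟨i, hi.1, hi.2, Nat.pos_of_ne_zero hpos⟩

theorem exists_cst_le_forall_pos_cost_lt_cst (B : ℕ) :
    ∃ j, w.cst n j ≤ B ∧ ∀ i, j ≤ i → 0 < w.cost (n + i) → B < w.cst n (i + 1) := by
  classical
  set v := Nat.findGreatest (fun v => ∃ j, w.cst n j = v) B
  obtain ⟨j, hj⟩ : ∃ j, w.cst n j = v :=
    Nat.findGreatest_spec (P := fun v => ∃ j, w.cst n j = v) (Nat.zero_le B)
      ⟨0, Finset.sum_range_zero _⟩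
  refine ⟨j, hj ▸ Nat.findGreatest_le B, fun i hji hpos => ?_⟩
  by_contra! hle
  have hmax : w.cst n (i + 1) ≤ v := Nat.le_findGreatest hle ⟨i + 1, rfl⟩
  have hji' := w.cst_mono n hji
  rw [cst_succ] at hmax
  omega

end Trace

namespace CPLTL

variable {P Var : Type} (κ : P) (w : Trace P) (α : Var → ℕ)

theorem not_sat_ffF (m : ℕ) : ¬ Sat w α m (ffF κ : CPLTL P Var) :=
  fun ⟨hκ, hnκ⟩ => hnκ hκ

theorem sat_alG (ψ : CPLTL P Var) (m : ℕ) :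
    Sat w α m (alG κ ψ) ↔ ∀ k, Sat w α (m + k) ψ := by
  refine ⟨fun h k => ?_, fun h k => Or.inl (h k)⟩
  rcases h k with h | ⟨l, -, hl⟩
  · exact h
  · exact absurd hl (not_sat_ffF κ w α _)

theorem sat_fleq_alG_next_iff_forall_pos_cost {w : Trace P} (hw : w.Valid κ) (n : ℕ) (x : Var)
    (φ : CPLTL P Var) :
    Sat w α n (.fleq x (alG κ (.next (.disj (.nneg κ) (alG κ φ))))) ↔
      ∃ j, w.cst n j ≤ α x ∧
        ∀ i, j ≤ i → 0 < w.cost (n + i) → ∀ m, i < m → Sat w α (n + m) φ := by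
  refine exists_congr fun j => and_congr_right fun _ => ?_
  simp only [sat_alG, Sat, ← Nat.forall_add_iff_forall_le]
  refine forall_congr' fun k => ?_
  rw [← add_assoc, hw, imp_iff_not_or]
  simp only [← Nat.add_one_le_iff, ← Nat.forall_add_iff_forall_le, add_assoc]

end CPLTL

theorem g_gt_expressible_general {P Var : Type} (κ : P)
    (φ : CPLTL P Var) (w : Trace P) (hw : w.Valid κ) (n : ℕ)
    (α : Var → ℕ) (x : Var) :
    SatGGt w α n x φ ↔
      CPLTL.Sat w α n (.fleq x (alG κ (.next (.disj (.nneg κ) (alG κ φ))))) := by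
  rw [CPLTL.sat_fleq_alG_next_iff_forall_pos_cost κ α hw]
  constructor
  · intro hG
    obtain ⟨j, hj, hlt⟩ := w.exists_cst_le_forall_pos_cost_lt_cst n (α x)
    exact ⟨j, hj, fun i hji hpos m him =>
      hG m ((hlt i hji hpos).trans_le (w.cst_mono n him))⟩
  · rintro ⟨j, hj, hG⟩ m hm
    obtain ⟨i, hji, him, hpos⟩ := w.exists_pos_cost_of_cst_lt n (hj.trans_lt hm)
    exact hG i hji hpos m him

/-- `G_{>x} φ ≡ F_{≤x} G X (¬κ ∨ G φ)`. -/
theorem g_gt_expressible {P Var : Type} [Infinite Var] (κ : P)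
    (φ : CPLTL P Var) (w : Trace P) (hw : w.Valid κ) (n : ℕ)
    (α : Var → ℕ) (x : Var) :
    SatGGt w α n x φ ↔
      CPLTL.Sat w α n (.fleq x (alG κ (.next (.disj (.nneg κ) (alG κ φ))))) :=
  g_gt_expressible_general κ φ w hw n α x
end
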